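/- arXiv:1709.04645 — 2 statements merged into one kernel-verified Lean document; each statement's English description precedes it below -/
import Mathlib

section
/- Let Q be a graph 3-connected along a bond d with both sides of d containing edges, with left edge set L and right edge set R. If Q[L] is 2-connected but not a triangle, and Q[R] is 2-connected or consists of a single edge, then (Q,d) is not irreducible. -/
open SimpleGraph

/-- An edge set `X` is connected: any two vertices covered by `X` are joined by a path
consisting of edges of `X`.  (The empty edge set counts as connected.) -/
def EdgeSetConnected {V : Type*} (X : Set (Sym2 V)) : Prop :=
  ∀ u ∈ (fromEdgeSet X).support, ∀ v ∈ (fromEdgeSet X).support, (fromEdgeSet X).Reachable u v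

/-- The subgraph `G[X]` spanned by an edge set `X`, as a graph on the covered vertices. -/
def edgeSubgraph {V : Type*} (X : Set (Sym2 V)) :
    SimpleGraph ((fromEdgeSet X).support) :=
  (fromEdgeSet X).induce (fromEdgeSet X).support

/-- The number of connected components of `G[X]`. -/
noncomputable def edgeComponents {V : Type*} (X : Set (Sym2 V)) : ℕ :=
  Nat.card (edgeSubgraph X).ConnectedComponent

/-- A graph is `k`-connected if it has more than `k` vertices and deleting fewer than `k`
vertices always leaves a connected graph. -/
def KConnected {V : Type*} (k : ℕ) (G : SimpleGraph V) : Prop :=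
  k < Nat.card V ∧ ∀ S : Set V, S.ncard < k → (G.induce Sᶜ).Connected

/-- A constraint graph: a finite simple graph `G` together with a set `X` of edges. -/
structure CGraph : Type 1 where
  V : Type
  G : SimpleGraph V
  X : Set (Sym2 V)
  fin : Finite V := by infer_instance

attribute [instance] CGraph.fin

/-- `X` really is a set of edges of `G`. -/
def CGraph.WF (C : CGraph) : Prop := C.X ⊆ C.G.edgeSet

/-- The vertex map contracting `v` onto `u`. -/
noncomputable def contractFun {V : Type*} {u v : V} (huv : u ≠ v) (x : V) : {w : V // w ≠ v} :=
  letI := Classical.decEq V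
  if h : x = v then ⟨u, huv⟩ else ⟨x, h⟩

/-- Contraction of a simple graph, identifying `v` with `u` (loops are discarded, parallel
edges are merged, so the result is simple). -/
noncomputable def contractGraph {V : Type*} (G : SimpleGraph V) {u v : V} (huv : u ≠ v) :
    SimpleGraph {w : V // w ≠ v} :=
  fromEdgeSet (Sym2.map (contractFun huv) '' G.edgeSet)

/-- Contraction of a constraint graph: identify `v` with `u`; the new constraint consists of all
non-loop images of constraint edges; thus in each parallel class edges of `X` are preferred. -/
noncomputable def CGraph.contract (C : CGraph) (u v : C.V) (huv : u ≠ v) : CGraph where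
  V := {w : C.V // w ≠ v}
  G := contractGraph C.G huv
  X := {e | e ∈ Sym2.map (contractFun huv) '' C.X ∧ ¬ e.IsDiag}

/-- Deletion of an edge from a constraint graph. -/
def CGraph.deleteEdge (C : CGraph) (e : Sym2 C.V) : CGraph where
  V := C.V
  G := C.G.deleteEdges {e}
  X := C.X

/-- One step in forming a constraint minor: delete an edge not in `X`, or contract an edge. -/
inductive CMinorStep : CGraph → CGraph → Prop
  | del (C : CGraph) (e : Sym2 C.V) (he : e ∈ C.G.edgeSet) (hx : e ∉ C.X) :
      CMinorStep C (C.deleteEdge e)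
  | contr (C : CGraph) (u v : C.V) (h : C.G.Adj u v) :
      CMinorStep C (C.contract u v h.ne)

/-- The constraint-minor relation. -/
def IsCMinor : CGraph → CGraph → Prop := Relation.ReflTransGen CMinorStep

/-- Isomorphism of constraint graphs. -/
def CGIso (C D : CGraph) : Prop :=
  ∃ φ : C.G ≃g D.G, Sym2.map (⇑φ) '' C.X = D.X

/-- The constraint `K₄`. -/
def constraintK4 : CGraph where
  V := Fin 4
  G := ⊤
  X := {s(0, 1), s(2, 3)}

def wheelGraph : SimpleGraph (Fin 5) :=
  fromEdgeSet {s(0, 1), s(1, 2), s(2, 3), s(3, 0), s(0, 4), s(1, 4), s(2, 4), s(3, 4)}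

/-- The constraint wheel. -/
def constraintWheel : CGraph where
  V := Fin 5
  G := wheelGraph
  X := {s(0, 1), s(2, 3)}

/-- The prism `K₃ □ K₂`, with triangles `{0,1,2}` and `{3,4,5}`. -/
def prismGraph : SimpleGraph (Fin 6) :=
  fromEdgeSet {s(0, 1), s(1, 2), s(0, 2), s(3, 4), s(4, 5), s(3, 5), s(0, 3), s(1, 4), s(2, 5)}

def topEdges : Set (Sym2 (Fin 6)) := {s(0, 1), s(1, 2), s(0, 2)}
def botEdges : Set (Sym2 (Fin 6)) := {s(3, 4), s(4, 5), s(3, 5)}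

/-- Constraint sets of the four constraint prisms: contained in the two triangles and meeting
every vertex, inducing a spanning connected subgraph of each triangle. -/
def PrismConstraintSet (X : Set (Sym2 (Fin 6))) : Prop :=
  X ⊆ topEdges ∪ botEdges ∧
  EdgeSetConnected (X ∩ topEdges) ∧ (fromEdgeSet (X ∩ topEdges)).support = {0, 1, 2} ∧
  EdgeSetConnected (X ∩ botEdges) ∧ (fromEdgeSet (X ∩ botEdges)).support = {3, 4, 5}

/-- `C` is one of the four constraint prisms. -/
def IsConstraintPrism (C : CGraph) : Prop :=
  ∃ X, PrismConstraintSet X ∧ CGIso C (CGraph.mk (Fin 6) prismGraph X)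

/-- The six obstructions. -/
def IsObstruction (D : CGraph) : Prop :=
  CGIso D constraintK4 ∨ CGIso D constraintWheel ∨ IsConstraintPrism D

/-- The weird prism. -/
def weirdPrism : CGraph where
  V := Fin 6
  G := prismGraph
  X := {s(0, 3), s(1, 4), s(2, 5)}

/-- The Wagner graph `V₈`. -/
def wagnerGraph : SimpleGraph (Fin 8) :=
  fromEdgeSet {s(0, 1), s(1, 2), s(2, 3), s(3, 4), s(4, 5), s(5, 6), s(6, 7), s(7, 0),
    s(0, 4), s(1, 5), s(2, 6), s(3, 7)}

/-- The constraint Wagner graph: `X` is the complement of the 6-cycle `0-1-5-4-3-7-0`. -/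
def constraintWagner : CGraph where
  V := Fin 8
  G := wagnerGraph
  X := {s(1, 2), s(2, 3), s(5, 6), s(6, 7), s(0, 4), s(2, 6)}

/-- The Wagner prism. -/
def wagnerPrism : CGraph where
  V := Fin 6
  G := prismGraph
  X := {s(0, 3), s(1, 2), s(4, 5)}

/-- `(G, X)` has a 3-connected constraint minor whose constraint is disconnected. -/
def BadMinor (C : CGraph) : Prop :=
  ∃ C', IsCMinor C C' ∧ KConnected 3 C'.G ∧ ¬ EdgeSetConnected C'.X

/-- An edge `e ∉ X` is essential if neither `(G/e, X ∩ E(G/e))` nor `(G∖e, X)` has a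
3-connected constraint minor with disconnected constraint. -/
def Essential (C : CGraph) (e : Sym2 C.V) : Prop :=
  ¬ BadMinor (C.deleteEdge e) ∧
  ∀ u v, ∀ h : C.G.Adj u v, s(u, v) = e → ¬ BadMinor (C.contract u v h.ne)

/-- An edge joining two distinct components of `G[X]`. -/
def JoinsComponents {V : Type*} (X : Set (Sym2 V)) (e : Sym2 V) : Prop :=
  ∃ a b, e = s(a, b) ∧ a ∈ (fromEdgeSet X).support ∧ b ∈ (fromEdgeSet X).support ∧
    ¬ (fromEdgeSet X).Reachable a b

/-- The degree of a vertex. -/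
noncomputable def vdeg {V : Type*} (G : SimpleGraph V) (v : V) : ℕ := (G.neighborSet v).ncard

/-- The component of `G[X]` containing the edge `f` consists of the single edge `f`. -/
def SingleEdgeComponent {V : Type*} (X : Set (Sym2 V)) (f : Sym2 V) : Prop :=
  f ∈ X ∧ ∀ g ∈ X, (∃ a ∈ f, ∃ b ∈ g, (fromEdgeSet X).Reachable a b) → g = f

/-- The edges of `Q` with all endvertices in `S`: the edges of the side `Q[S]`. -/
def sideEdges {V : Type*} (Q : SimpleGraph V) (S : Set V) : Set (Sym2 V) :=
  {e | e ∈ Q.edgeSet ∧ ∀ v ∈ e, v ∈ S}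

/-- The edges of `Q` with one endvertex in `S` and one outside `S`. -/
def crossEdges {V : Type*} (Q : SimpleGraph V) (S : Set V) : Set (Sym2 V) :=
  {e | e ∈ Q.edgeSet ∧ (∃ v ∈ e, v ∈ S) ∧ ∃ v ∈ e, v ∉ S}

/-- `d` is a bond of `Q` with sides induced by `S` and `Sᶜ`. -/
def IsBondWith {V : Type*} (Q : SimpleGraph V) (d : Set (Sym2 V)) (S : Set V) : Prop :=
  S.Nonempty ∧ Sᶜ.Nonempty ∧ (Q.induce S).Connected ∧ (Q.induce Sᶜ).Connected ∧
    d = crossEdges Q S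

/-- `Q` is 3-connected along the bond `d` (with left side `S`): `Q` is 2-connected and no pair
of vertices, one from each side, separates `Q`. -/
def ThreeConnAlong {V : Type*} (Q : SimpleGraph V) (d : Set (Sym2 V)) (S : Set V) : Prop :=
  IsBondWith Q d S ∧ KConnected 2 Q ∧
    ∀ x ∈ S, ∀ y ∈ Sᶜ, (Q.induce ({x, y}ᶜ : Set V)).Preconnected

/-- One step of a special contraction minor: contract an edge not in the bond. -/
inductive SCMStep : CGraph → CGraph → Prop
  | contr (C : CGraph) (u v : C.V) (h : C.G.Adj u v) (hd : s(u, v) ∉ C.X) :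
      SCMStep C (C.contract u v h.ne)

/-- The special-contraction-minor relation. -/
def IsSCMinor : CGraph → CGraph → Prop := Relation.ReflTransGen SCMStep

/-- A proper (non-identical) special contraction minor. -/
def IsProperSCMinor : CGraph → CGraph → Prop := Relation.TransGen SCMStep

/-- The special `K₄`: `K₄` together with a bond of size 4. -/
def specialK4 : CGraph where
  V := Fin 4
  G := ⊤
  X := {s(0, 2), s(0, 3), s(1, 2), s(1, 3)}

/-- The special prism: the prism together with the bond complementing the two triangles. -/
def specialPrism : CGraph where
  V := Fin 6
  G := prismGraph
  X := {s(0, 3), s(1, 4), s(2, 5)}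

/-- `(Q, d)` is 3-connected along `d` and both sides of `d` contain edges. -/
def GoodAlong (C : CGraph) : Prop :=
  ∃ S : Set C.V, ThreeConnAlong C.G C.X S ∧
    (sideEdges C.G S).Nonempty ∧ (sideEdges C.G Sᶜ).Nonempty

/-- `(Q, d)` is irreducible. -/
def BondIrreducible (C : CGraph) : Prop :=
  (∃ S : Set C.V, ThreeConnAlong C.G C.X S) ∧
  ¬ ∃ C', IsProperSCMinor C C' ∧ GoodAlong C'

/-- An edge set forming a triangle. -/
def IsTriangle {V : Type*} (X : Set (Sym2 V)) : Prop :=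
  ∃ a b c : V, a ≠ b ∧ a ≠ c ∧ b ≠ c ∧ X = {s(a, b), s(b, c), s(a, c)}

/-- An edge set consisting of a single edge. -/
def IsSingleEdge {V : Type*} (X : Set (Sym2 V)) : Prop :=
  ∃ a b : V, a ≠ b ∧ X = {s(a, b)}

/-- `M` is (isomorphic to) the cycle matroid of `G`, via the bijection `f` between the ground
set of `M` and the edges of `G`: a set is independent iff its image is a forest. -/
def IsGraphicRep {α : Type} (M : Matroid α) {V : Type} (G : SimpleGraph V)
    (f : α → Sym2 V) : Prop :=
  Set.BijOn f M.E G.edgeSet ∧ ∀ I ⊆ M.E, (M.Indep I ↔ (fromEdgeSet (f '' I)).IsAcyclic)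

/-- The constraint matroid `(M, X)` is realisable. -/
def Realisable {α : Type} (M : Matroid α) (X : Set α) : Prop :=
  ∃ (V : Type) (_ : Finite V) (G : SimpleGraph V) (f : α → Sym2 V),
    IsGraphicRep M G f ∧ EdgeSetConnected (f '' X)

/-- Deletion of a set of elements from a matroid. -/
def Matroid.del {α : Type} (M : Matroid α) (D : Set α) : Matroid α := Matroid.restrict M (M.E \ D)

/-- Contraction of a set of elements of a matroid. -/
def Matroid.con {α : Type} (M : Matroid α) (C : Set α) : Matroid α :=
  Matroid.dual (Matroid.del (Matroid.dual M) C)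

/-- `(N, Y)` is a constraint minor of `(M, X)`: contract an arbitrary set `C` and delete a
set `D` of elements not in `X`. -/
def MatroidCMinor {α : Type} (M : Matroid α) (X : Set α) (N : Matroid α) (Y : Set α) : Prop :=
  ∃ C D : Set α, D ⊆ M.E \ X ∧ N = (M.con C).del D ∧ Y = X \ C

/-- `(N, Y)` is isomorphic, via the cycle matroid, to one of the six obstructions. -/
def MatroidObstruction {α : Type} (N : Matroid α) (Y : Set α) : Prop :=
  (∃ f : α → Sym2 (Fin 4), IsGraphicRep N constraintK4.G f ∧ f '' Y = constraintK4.X) ∨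
  (∃ f : α → Sym2 (Fin 5), IsGraphicRep N constraintWheel.G f ∧ f '' Y = constraintWheel.X) ∨
  (∃ X, PrismConstraintSet X ∧
    ∃ f : α → Sym2 (Fin 6), IsGraphicRep N prismGraph f ∧ f '' Y = X)

namespace BSTC


variable {V : Type*} {Q : SimpleGraph V} {U U₁ U₂ : Set V} {a b c : V}

inductive ReachIn (Q : SimpleGraph V) (U : Set V) : V → V → Prop
  | refl {a : V} (ha : a ∈ U) : ReachIn Q U a a
  | tail {a b c : V} (hab : ReachIn Q U a b) (hbc : Q.Adj b c) (hc : c ∈ U) : ReachIn Q U a c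

theorem ReachIn.mem_left (h : ReachIn Q U a b) : a ∈ U := by
  induction h with
  | refl ha => exact ha
  | tail _ _ _ ih => exact ih

theorem ReachIn.mem_right (h : ReachIn Q U a b) : b ∈ U := by
  cases h with
  | refl ha => exact ha
  | tail _ _ hc => exact hc

theorem ReachIn.trans (h : ReachIn Q U a b) (h2 : ReachIn Q U b c) : ReachIn Q U a c := by
  induction h2 with
  | refl _ => exact h
  | tail _ hbc hc ih => exact ih.tail hbc hc

theorem ReachIn.head (ha : a ∈ U) (hab : Q.Adj a b) (h : ReachIn Q U b c) : ReachIn Q U a c :=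
  (ReachIn.tail (.refl ha) hab h.mem_left).trans h

theorem ReachIn.symm (h : ReachIn Q U a b) : ReachIn Q U b a := by
  induction h with
  | refl ha => exact .refl ha
  | tail hab hbc hc ih => exact ReachIn.head hc hbc.symm ih

theorem ReachIn.mono (hU : U ⊆ U₁) (h : ReachIn Q U a b) : ReachIn Q U₁ a b := by
  induction h with
  | refl ha => exact .refl (hU ha)
  | tail _ hbc hc ih => exact ih.tail hbc (hU hc)

theorem ReachIn.single (ha : a ∈ U) (hb : b ∈ U) (hab : Q.Adj a b) : ReachIn Q U a b :=
  (ReachIn.refl ha).tail hab hb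

theorem ReachIn.crossing {P : Set V} (h : ReachIn Q U a b) (ha : a ∈ P) (hb : b ∉ P) :
    ∃ p ∈ U ∩ P, ∃ q ∈ U \ P, Q.Adj p q := by
  induction h with
  | refl _ => exact absurd ha hb
  | @tail b' c' hab hbc hc ih =>
    by_cases hbP : b' ∈ P
    · exact ⟨b', ⟨hab.mem_right, hbP⟩, c', ⟨hc, hb⟩, hbc⟩
    · exact ih hbP

theorem ReachIn.first_step (h : ReachIn Q U a b) (hne : b ≠ a) : ∃ c ∈ U, Q.Adj a c := by
  induction h with
  | refl _ => exact absurd rfl hne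
  | @tail b' c' hab hbc hc ih =>
    by_cases hba : b' = a
    · exact ⟨c', hc, hba ▸ hbc⟩
    · exact ih hba

def ConnIn (Q : SimpleGraph V) (U : Set V) : Prop :=
  U.Nonempty ∧ ∀ a ∈ U, ∀ b ∈ U, ReachIn Q U a b

theorem connIn_singleton (a : V) : ConnIn Q {a} :=
  ⟨⟨a, rfl⟩, by rintro x rfl y rfl; exact .refl rfl⟩

theorem connIn_pair (hab : Q.Adj a b) : ConnIn Q {a, b} := by
  refine ⟨⟨a, Or.inl rfl⟩, ?_⟩
  have hA : (a : V) ∈ ({a, b} : Set V) := Or.inl rfl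
  have hB : (b : V) ∈ ({a, b} : Set V) := Or.inr rfl
  rintro x (rfl | rfl) y (rfl | rfl)
  · exact .refl hA
  · exact .single hA hB hab
  · exact .single hB hA hab.symm
  · exact .refl hB

theorem ConnIn.union (h1 : ConnIn Q U₁) (h2 : ConnIn Q U₂) (hp : a ∈ U₁) (hq : b ∈ U₂)
    (hadj : Q.Adj a b) : ConnIn Q (U₁ ∪ U₂) := by
  obtain ⟨ne1, hr1⟩ := h1
  obtain ⟨ne2, hr2⟩ := h2
  have key : ∀ x ∈ U₁ ∪ U₂, ReachIn Q (U₁ ∪ U₂) x a := by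
    rintro x (hx | hx)
    · exact (hr1 x hx a hp).mono Set.subset_union_left
    · exact ((hr2 x hx b hq).mono Set.subset_union_right).tail hadj.symm (Or.inl hp)
  exact ⟨⟨a, Or.inl hp⟩, fun x hx y hy => (key x hx).trans (key y hy).symm⟩

theorem ConnIn.insert (h : ConnIn Q U) (hb : b ∈ U) (hadj : Q.Adj a b) :
    ConnIn Q (insert a U) := by
  have := (connIn_singleton (Q := Q) a).union h rfl hb hadj
  rwa [Set.singleton_union] at this

theorem reachable_transfer {W : Type*} {G : SimpleGraph W} (g : W → V)
    (hadj : ∀ x y : W, G.Adj x y → Q.Adj (g x) (g y) ∨ g x = g y)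
    (hmem : ∀ x : W, g x ∈ U) {x y : W} (h : G.Reachable x y) :
    ReachIn Q U (g x) (g y) := by
  obtain ⟨w⟩ := h
  induction w with
  | nil => exact .refl (hmem _)
  | @cons p q r hpq w ih =>
    rcases hadj _ _ hpq with h' | h'
    · exact ReachIn.head (hmem _) h' ih
    · rw [h']; exact ih

theorem reachIn_transfer {V' : Type*} {Q' : SimpleGraph V'} {U' : Set V'} (f : V → V')
    (hadj : ∀ x y, Q.Adj x y → x ∈ U → y ∈ U → Q'.Adj (f x) (f y) ∨ f x = f y)
    (hmem : ∀ x ∈ U, f x ∈ U') {a b} (h : ReachIn Q U a b) : ReachIn Q' U' (f a) (f b) := by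
  induction h with
  | refl ha => exact .refl (hmem _ ha)
  | @tail b' c' hab hbc hc ih =>
    rcases hadj _ _ hbc hab.mem_right hc with h' | h'
    · exact ih.tail h' (hmem _ hc)
    · rwa [← h']

theorem reachIn_induce_reachable (h : ReachIn Q U a b) :
    ∀ (ha : a ∈ U) (hb : b ∈ U), (Q.induce U).Reachable ⟨a, ha⟩ ⟨b, hb⟩ := by
  induction h with
  | refl _ => intro _ _; exact Reachable.refl _
  | @tail b' c' hab hbc hc ih =>
    intro ha hb
    exact (ih ha hab.mem_right).trans (Adj.reachable (by exact hbc))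

theorem reachIn_induce_preconnected (h : ∀ a ∈ U, ∀ b ∈ U, ReachIn Q U a b) :
    (Q.induce U).Preconnected := fun x y =>
  reachIn_induce_reachable (h _ x.2 _ y.2) x.2 y.2

theorem connIn_induce_connected (h : ConnIn Q U) : (Q.induce U).Connected := by
  obtain ⟨⟨a, ha⟩, hr⟩ := h
  haveI : Nonempty U := ⟨⟨a, ha⟩⟩
  exact ⟨reachIn_induce_preconnected hr⟩

theorem induce_preconnected_reachIn (h : (Q.induce U).Preconnected) (hx : a ∈ U) (hy : b ∈ U) :
    ReachIn Q U a b :=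
  reachable_transfer (g := (↑· : U → V)) (fun p q hpq => Or.inl hpq) (fun p => p.2)
    (h ⟨a, hx⟩ ⟨b, hy⟩)

theorem induce_connected_connIn (h : (Q.induce U).Connected) : ConnIn Q U := by
  obtain ⟨a⟩ := h.nonempty
  exact ⟨⟨a, a.2⟩, fun x hx y hy => induce_preconnected_reachIn h.preconnected hx hy⟩



variable [Finite V]

theorem ConnIn.exists_adj (h : ConnIn Q U) (ha : a ∈ U) (h2 : 1 < U.ncard) :
    ∃ b ∈ U, Q.Adj a b := by
  obtain ⟨c, hc, hca⟩ := Set.exists_ne_of_one_lt_ncard h2 a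
  exact (h.2 a ha c hc).first_step hca

theorem ncard_le_pair_union (P : Set V) (m z : V) : P.ncard ≤ 2 + (P \ {m, z}).ncard := by
  have h1 : P ⊆ ({m, z} : Set V) ∪ (P \ {m, z}) := by
    intro x hx
    by_cases hmz : x ∈ ({m, z} : Set V)
    · exact Or.inl hmz
    · exact Or.inr ⟨hx, hmz⟩
  calc P.ncard ≤ (({m, z} : Set V) ∪ (P \ {m, z})).ncard :=
        Set.ncard_le_ncard h1 (Set.toFinite _)
    _ ≤ ({m, z} : Set V).ncard + (P \ {m, z}).ncard := Set.ncard_union_le _ _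
    _ ≤ 2 + (P \ {m, z}).ncard := by
        have : ({m, z} : Set V).ncard ≤ 2 := by
          apply (Set.ncard_insert_le _ _).trans
          simp [Set.ncard_singleton]
        omega

theorem ncard_le_one_union (P : Set V) (w : V) : P.ncard ≤ 1 + (P \ {w}).ncard := by
  have h1 : P ⊆ ({w} : Set V) ∪ (P \ {w}) := by
    intro x hx
    by_cases hw : x ∈ ({w} : Set V)
    · exact Or.inl hw
    · exact Or.inr ⟨hx, hw⟩
  calc P.ncard ≤ (({w} : Set V) ∪ (P \ {w})).ncard := Set.ncard_le_ncard h1 (Set.toFinite _)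
    _ ≤ 1 + (P \ {w}).ncard := by
        apply (Set.ncard_union_le _ _).trans
        simp [Set.ncard_singleton]

theorem diff_pair_nonempty {P : Set V} (h : 3 ≤ P.ncard) (m z : V) : (P \ {m, z}).Nonempty := by
  have := ncard_le_pair_union P m z
  apply Set.nonempty_of_ncard_ne_zero
  omega

theorem one_lt_ncard_diff {P : Set V} (h : 3 ≤ P.ncard) (w : V) : 1 < (P \ {w}).ncard := by
  have := ncard_le_one_union P w
  omega

theorem diff_pair_one_lt {P : Set V} (h : 4 ≤ P.ncard) (m z : V) : 1 < (P \ {m, z}).ncard := by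
  have := ncard_le_pair_union P m z
  omega

/-- Two-connectivity data for the subgraph induced on `P`. -/
structure TwoConnData (Q : SimpleGraph V) (P : Set V) : Prop where
  conn : ConnIn Q P
  card3 : 3 ≤ P.ncard
  del : ∀ w : V, ConnIn Q (P \ {w})

theorem TwoConnData.exists_nbr_avoid {P : Set V} (td : TwoConnData Q P) {s : V} (hs : s ∈ P)
    (w : V) (hsw : s ≠ w) : ∃ b ∈ P \ {w}, Q.Adj s b :=
  (td.del w).exists_adj ⟨hs, hsw⟩ (one_lt_ncard_diff td.card3 w)

theorem reachIn_avoid {A : Set V} {v₀ : V}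
    (hbd : ∀ p q, p ∈ U → q ∈ U → p ∉ A → q ∈ A → Q.Adj p q → p = v₀)
    {d t : V} (h : ReachIn Q U d t) (hd : d ∉ A) :
    (t ∉ A → ReachIn Q (U \ A) d t ∨ ReachIn Q (U \ A) d v₀) ∧
    (t ∈ A → ReachIn Q (U \ A) d v₀) := by
  induction h with
  | refl ha => exact ⟨fun _ => Or.inl (.refl ⟨ha, hd⟩), fun ht => absurd ht hd⟩
  | @tail b' c' hab hbc hc ih =>
    constructor
    · intro hcA
      by_cases hbA : b' ∈ A
      · exact Or.inr (ih.2 hbA)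
      · rcases ih.1 hbA with h' | h'
        · exact Or.inl (h'.tail hbc ⟨hc, hcA⟩)
        · exact Or.inr h'
    · intro hcA
      by_cases hbA : b' ∈ A
      · exact ih.2 hbA
      · have hb : b' = v₀ := hbd b' c' hab.mem_right hc hbA hcA hbc
        rcases ih.1 hbA with h' | h'
        · exact hb ▸ h'
        · exact h'

theorem lemF {P : Set V} (td : TwoConnData Q P) {m : V} (hm : m ∈ P) :
    ∀ n, ∀ A : Set V, A.ncard = n → A ⊆ P → m ∉ A →
    ∀ v₀, v₀ ∈ P → v₀ ∉ A → v₀ ≠ m →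
    (∀ p q, p ∈ P → p ∉ A → q ∈ A → Q.Adj p q → p = m ∨ p = v₀) →
    (∃ a ∈ A, Q.Adj m a) →
    ∃ w ∈ A, Q.Adj m w ∧ ConnIn Q (P \ {m, w}) := by
  intro n
  induction n using Nat.strong_induction_on with
  | _ n IH =>
  rintro A hA hAP hmA v₀ hv₀P hv₀A hv₀m hbd ⟨w, hwA, hmw⟩
  by_cases hconn : ConnIn Q (P \ {m, w})
  · exact ⟨w, hwA, hmw, hconn⟩
  have hwP : w ∈ P := hAP hwA
  have hv₀U : v₀ ∈ P \ {m, w} := by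
    refine ⟨hv₀P, ?_⟩
    simp only [Set.mem_insert_iff, Set.mem_singleton_iff]
    push_neg
    exact ⟨hv₀m, fun h => hv₀A (h ▸ hwA)⟩
  have hx₀ : ∃ x₀ ∈ P \ {m, w}, ¬ ReachIn Q (P \ {m, w}) x₀ v₀ := by
    by_contra hno
    push_neg at hno
    exact hconn ⟨⟨v₀, hv₀U⟩, fun x hx y hy => (hno x hx).trans (hno y hy).symm⟩
  obtain ⟨x₀, hx₀U, hx₀r⟩ := hx₀
  set D : Set V := {d | d ∈ P \ {m, w} ∧ ReachIn Q (P \ {m, w}) x₀ d} with hD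
  have hx₀D : x₀ ∈ D := ⟨hx₀U, .refl hx₀U⟩
  have hv₀D : v₀ ∉ D := fun h => hx₀r h.2
  have hmU : m ∉ P \ {m, w} := fun h => h.2 (Or.inl rfl)
  have hwU : w ∉ P \ {m, w} := fun h => h.2 (Or.inr rfl)
  have hmD : m ∉ D := fun h => hmU h.1
  have hwD : w ∉ D := fun h => hwU h.1
  have hclosed : ∀ p q, p ∈ D → q ∈ P \ {m, w} → Q.Adj p q → q ∈ D :=
    fun p q hp hq hadj => ⟨hq, hp.2.tail hadj hq⟩
  have hDA : D ⊆ A := by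
    intro d hd
    by_contra hdA
    have hdm : d ≠ m := fun h => hmD (h ▸ hd)
    have h1 : ReachIn Q (P \ {m}) d v₀ :=
      (td.del m).2 d ⟨hd.1.1, hdm⟩ v₀ ⟨hv₀P, hv₀m⟩
    have hbd' : ∀ p q, p ∈ P \ {m} → q ∈ P \ {m} → p ∉ A → q ∈ A → Q.Adj p q → p = v₀ := by
      intro p q hp _ hpA hqA hadj
      rcases hbd p q hp.1 hpA hqA hadj with h | h
      · exact absurd h hp.2
      · exact h
    have hsub : (P \ {m}) \ A ⊆ P \ {m, w} := by
      rintro z ⟨⟨hzP, hzm⟩, hzA⟩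
      refine ⟨hzP, ?_⟩
      simp only [Set.mem_insert_iff, Set.mem_singleton_iff]
      push_neg
      exact ⟨hzm, fun h => hzA (h ▸ hwA)⟩
    have hav := (reachIn_avoid hbd' h1 hdA).1 hv₀A
    have hreach : ReachIn Q (P \ {m, w}) d v₀ := by
      rcases hav with h' | h' <;> exact h'.mono hsub
    exact hx₀r (hd.2.trans hreach)
  have hB : ∃ p ∈ D, Q.Adj m p := by
    have hx₀w : x₀ ≠ w := fun h => hwU (h ▸ hx₀U)
    have hv₀w : v₀ ≠ w := fun h => hv₀A (h ▸ hwA)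
    have h1 : ReachIn Q (P \ {w}) x₀ v₀ :=
      (td.del w).2 x₀ ⟨hx₀U.1, hx₀w⟩ v₀ ⟨hv₀P, hv₀w⟩
    obtain ⟨p, hp, q, hq, hadj⟩ := h1.crossing hx₀D hv₀D
    have hqm : q = m := by
      by_contra hqm
      exact hq.2 (hclosed p q hp.2 ⟨hq.1.1, by
        simp only [Set.mem_insert_iff, Set.mem_singleton_iff]
        push_neg
        exact ⟨hqm, hq.1.2⟩⟩ hadj)
    exact ⟨p, hp.2, hqm ▸ hadj.symm⟩
  have hbdD : ∀ p q, p ∈ P → p ∉ D → q ∈ D → Q.Adj p q → p = m ∨ p = w := by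
    intro p q hpP hpD hqD hadj
    by_contra hcon
    push_neg at hcon
    exact hpD (hclosed q p hqD ⟨hpP, by
      simp only [Set.mem_insert_iff, Set.mem_singleton_iff]
      push_neg
      exact hcon⟩ hadj.symm)
  have hsub : D ⊂ A := ⟨hDA, fun hAD => hwD (hAD hwA)⟩
  have hcard : D.ncard < n := hA ▸ Set.ncard_lt_ncard hsub A.toFinite
  obtain ⟨w', hw'D, hw'adj, hw'conn⟩ :=
    IH D.ncard hcard D rfl (hDA.trans hAP) hmD w hwP hwD hmw.ne' hbdD hB
  exact ⟨w', hDA hw'D, hw'adj, hw'conn⟩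

theorem lemF_entry {P : Set V} (td : TwoConnData Q P) {m z x₀ r : V} (hm : m ∈ P)
    (hmz : Q.Adj m z) (hz : z ∈ P)
    (hx₀U : x₀ ∈ P \ {m, z}) (hrU : r ∈ P \ {m, z})
    (hnr : ¬ ReachIn Q (P \ {m, z}) x₀ r) :
    ∃ w ∈ P, w ≠ r ∧ Q.Adj m w ∧ ConnIn Q (P \ {m, w}) := by
  set D : Set V := {d | d ∈ P \ {m, z} ∧ ReachIn Q (P \ {m, z}) x₀ d} with hD
  have hx₀D : x₀ ∈ D := ⟨hx₀U, .refl hx₀U⟩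
  have hrD : r ∉ D := fun h => hnr h.2
  have hmU : m ∉ P \ {m, z} := fun h => h.2 (Or.inl rfl)
  have hzU : z ∉ P \ {m, z} := fun h => h.2 (Or.inr rfl)
  have hclosed : ∀ p q, p ∈ D → q ∈ P \ {m, z} → Q.Adj p q → q ∈ D :=
    fun p q hp hq hadj => ⟨hq, hp.2.tail hadj hq⟩
  have hbdD : ∀ p q, p ∈ P → p ∉ D → q ∈ D → Q.Adj p q → p = m ∨ p = z := by
    intro p q hpP hpD hqD hadj
    by_contra hcon
    push_neg at hcon
    exact hpD (hclosed q p hqD ⟨hpP, by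
      simp only [Set.mem_insert_iff, Set.mem_singleton_iff]
      push_neg
      exact hcon⟩ hadj.symm)
  have hB : ∃ p ∈ D, Q.Adj m p := by
    have hx₀z : x₀ ≠ z := fun h => hzU (h ▸ hx₀U)
    have hrz : r ≠ z := fun h => hzU (h ▸ hrU)
    have h1 : ReachIn Q (P \ {z}) x₀ r :=
      (td.del z).2 x₀ ⟨hx₀U.1, hx₀z⟩ r ⟨hrU.1, hrz⟩
    obtain ⟨p, hp, q, hq, hadj⟩ := h1.crossing hx₀D hrD
    have hqm : q = m := by
      by_contra hqm
      exact hq.2 (hclosed p q hp.2 ⟨hq.1.1, by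
        simp only [Set.mem_insert_iff, Set.mem_singleton_iff]
        push_neg
        exact ⟨hqm, hq.1.2⟩⟩ hadj)
    exact ⟨p, hp.2, hqm ▸ hadj.symm⟩
  obtain ⟨w, hwD, hwadj, hwconn⟩ :=
    lemF td hm D.ncard D rfl (fun d hd => hd.1.1) (fun h => hmU h.1) z hz
      (fun h => hzU h.1) hmz.ne' hbdD hB
  exact ⟨w, hwD.1.1, fun h => hrD (h ▸ hwD), hwadj, hwconn⟩

theorem exists_contractible {P : Set V} (td : TwoConnData Q P) {m : V} (hm : m ∈ P) :
    ∃ w ∈ P, Q.Adj m w ∧ ConnIn Q (P \ {m, w}) := by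
  obtain ⟨z, hz, hmz⟩ := td.conn.exists_adj hm (by have := td.card3; omega)
  by_cases hconn : ConnIn Q (P \ {m, z})
  · exact ⟨z, hz, hmz, hconn⟩
  have hpair : ∃ x ∈ P \ {m, z}, ∃ y ∈ P \ {m, z}, ¬ ReachIn Q (P \ {m, z}) x y := by
    by_contra h
    push_neg at h
    exact hconn ⟨diff_pair_nonempty td.card3 m z, h⟩
  obtain ⟨x, hxU, y, hyU, hxy⟩ := hpair
  obtain ⟨w, hwP, _, hwadj, hwconn⟩ := lemF_entry td hm hmz hz hxU hyU hxy
  exact ⟨w, hwP, hwadj, hwconn⟩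

theorem exists_contractible_avoid {P : Set V} (td : TwoConnData Q P) (h4 : 4 ≤ P.ncard)
    {w₀ : V} (hw₀ : w₀ ∈ P) :
    ∃ u v : V, u ∈ P ∧ v ∈ P ∧ u ≠ w₀ ∧ v ≠ w₀ ∧ Q.Adj u v ∧ ConnIn Q (P \ {u, v}) := by
  obtain ⟨p, hpP, hpw⟩ := Set.exists_ne_of_one_lt_ncard (show 1 < P.ncard by omega) w₀
  obtain ⟨z, hz, hpz⟩ := td.exists_nbr_avoid hpP w₀ hpw
  by_cases hconn : ConnIn Q (P \ {p, z})
  · exact ⟨p, z, hpP, hz.1, hpw, hz.2, hpz, hconn⟩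
  have hw₀U : w₀ ∈ P \ {p, z} := by
    refine ⟨hw₀, ?_⟩
    simp only [Set.mem_insert_iff, Set.mem_singleton_iff]
    push_neg
    refine ⟨Ne.symm hpw, fun h => hz.2 (Set.mem_singleton_iff.2 h.symm)⟩
  have hpair : ∃ x ∈ P \ {p, z}, ∃ y ∈ P \ {p, z}, ¬ ReachIn Q (P \ {p, z}) x y := by
    by_contra h
    push_neg at h
    exact hconn ⟨diff_pair_nonempty td.card3 p z, h⟩
  obtain ⟨x, hxU, y, hyU, hxy⟩ := hpair
  have hx₀ : ∃ x₀ ∈ P \ {p, z}, ¬ ReachIn Q (P \ {p, z}) x₀ w₀ := by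
    by_cases hxw : ReachIn Q (P \ {p, z}) x w₀
    · exact ⟨y, hyU, fun h => hxy (hxw.trans h.symm)⟩
    · exact ⟨x, hxU, hxw⟩
  obtain ⟨x₀, hx₀U, hx₀r⟩ := hx₀
  obtain ⟨w, hwP, hwr, hwadj, hwconn⟩ := lemF_entry td hpP hpz hz.1 hx₀U hw₀U hx₀r
  exact ⟨p, w, hpP, hwP, hpw, hwr, hwadj, hwconn⟩

theorem mem_triple_iff {α : Type*} {e A B C₀ : α} :
    e ∈ ({A, B, C₀} : Set α) ↔ e = A ∨ e = B ∨ e = C₀ := by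
  simp [Set.mem_insert_iff]

theorem mem_sideEdges_mk {P : Set V} {a b : V} :
    s(a, b) ∈ sideEdges Q P ↔ Q.Adj a b ∧ a ∈ P ∧ b ∈ P := by
  constructor
  · rintro ⟨he, hall⟩
    exact ⟨Q.mem_edgeSet.1 he, hall a (Sym2.mem_mk_left a b), hall b (Sym2.mem_mk_right a b)⟩
  · rintro ⟨hadj, ha, hb⟩
    refine ⟨Q.mem_edgeSet.2 hadj, ?_⟩
    intro x hx
    rcases Sym2.mem_iff.1 hx with rfl | rfl
    · exact ha
    · exact hb

theorem mem_crossEdges_mk {P : Set V} {a b : V} :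
    s(a, b) ∈ crossEdges Q P ↔ Q.Adj a b ∧ ((a ∈ P ∧ b ∉ P) ∨ (b ∈ P ∧ a ∉ P)) := by
  constructor
  · rintro ⟨he, ⟨x, hx, hxP⟩, ⟨y, hy, hyP⟩⟩
    refine ⟨Q.mem_edgeSet.1 he, ?_⟩
    rcases Sym2.mem_iff.1 hx with rfl | rfl <;> rcases Sym2.mem_iff.1 hy with rfl | rfl
    · exact absurd hxP hyP
    · exact Or.inl ⟨hxP, hyP⟩
    · exact Or.inr ⟨hxP, hyP⟩
    · exact absurd hxP hyP
  · rintro ⟨hadj, h | h⟩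
    · exact ⟨Q.mem_edgeSet.2 hadj, ⟨a, Sym2.mem_mk_left a b, h.1⟩, ⟨b, Sym2.mem_mk_right a b, h.2⟩⟩
    · exact ⟨Q.mem_edgeSet.2 hadj, ⟨b, Sym2.mem_mk_right a b, h.1⟩, ⟨a, Sym2.mem_mk_left a b, h.2⟩⟩

theorem crossEdges_compl {P : Set V} : crossEdges Q Pᶜ = crossEdges Q P := by
  ext e
  induction e using Sym2.inductionOn with
  | hf a b =>
    rw [mem_crossEdges_mk, mem_crossEdges_mk]
    simp only [Set.mem_compl_iff, not_not]
    tauto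

theorem side_not_cross {P : Set V} {a b : V} (ha : a ∈ P) (hb : b ∈ P) :
    s(a, b) ∉ crossEdges Q P := by
  rw [mem_crossEdges_mk]
  rintro ⟨-, (⟨-, h⟩ | ⟨-, h⟩)⟩
  · exact h hb
  · exact h ha

theorem support_sideEdges {P : Set V} (hconn : ConnIn Q P) (h2 : 1 < P.ncard) :
    (fromEdgeSet (sideEdges Q P)).support = P := by
  ext x
  simp only [mem_support]
  constructor
  · rintro ⟨w, hw⟩
    rw [fromEdgeSet_adj] at hw
    exact (mem_sideEdges_mk.1 hw.1).2.1
  · intro hx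
    obtain ⟨b, hb, hadj⟩ := hconn.exists_adj hx h2
    exact ⟨b, (fromEdgeSet_adj _).2 ⟨mem_sideEdges_mk.2 ⟨hadj, hx, hb⟩, hadj.ne⟩⟩

theorem twoConnData_of_KConnected {P : Set V} (hconn : ConnIn Q P)
    (hK : KConnected 2 (edgeSubgraph (sideEdges Q P))) : TwoConnData Q P := by
  have hsuppsub : (fromEdgeSet (sideEdges Q P)).support ⊆ P := by
    intro x hx
    rw [mem_support] at hx
    obtain ⟨w, hw⟩ := hx
    rw [fromEdgeSet_adj] at hw
    exact (mem_sideEdges_mk.1 hw.1).2.1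
  have hcard3 : 3 ≤ P.ncard := by
    have h1 := hK.1
    rw [Nat.card_coe_set_eq] at h1
    have := Set.ncard_le_ncard hsuppsub P.toFinite
    omega
  have hsupp : (fromEdgeSet (sideEdges Q P)).support = P :=
    support_sideEdges hconn (by omega)
  refine ⟨hconn, hcard3, ?_⟩
  intro w
  by_cases hw : w ∈ P
  case neg => rw [Set.diff_singleton_eq_self hw]; exact hconn
  case pos =>
  have hwsupp : w ∈ (fromEdgeSet (sideEdges Q P)).support := by rw [hsupp]; exact hw
  have hT : ({(⟨w, hwsupp⟩ : (fromEdgeSet (sideEdges Q P)).support)} :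
      Set (fromEdgeSet (sideEdges Q P)).support).ncard < 2 := by
    rw [Set.ncard_singleton]; omega
  have hC := hK.2 _ hT
  refine ⟨?_, ?_⟩
  · obtain ⟨c, hc, hcw⟩ := Set.exists_ne_of_one_lt_ncard (show 1 < P.ncard by omega) w
    exact ⟨c, hc, hcw⟩
  · intro x hx y hy
    have hxs : x ∈ (fromEdgeSet (sideEdges Q P)).support := by rw [hsupp]; exact hx.1
    have hys : y ∈ (fromEdgeSet (sideEdges Q P)).support := by rw [hsupp]; exact hy.1
    have hxT : (⟨x, hxs⟩ : (fromEdgeSet (sideEdges Q P)).support) ∈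
        ({(⟨w, hwsupp⟩ : (fromEdgeSet (sideEdges Q P)).support)} :
          Set (fromEdgeSet (sideEdges Q P)).support)ᶜ := by
      simp only [Set.mem_compl_iff, Set.mem_singleton_iff]
      exact fun h => hx.2 (congrArg Subtype.val h)
    have hyT : (⟨y, hys⟩ : (fromEdgeSet (sideEdges Q P)).support) ∈
        ({(⟨w, hwsupp⟩ : (fromEdgeSet (sideEdges Q P)).support)} :
          Set (fromEdgeSet (sideEdges Q P)).support)ᶜ := by
      simp only [Set.mem_compl_iff, Set.mem_singleton_iff]
      exact fun h => hy.2 (congrArg Subtype.val h)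
    have hr := hC.preconnected ⟨⟨x, hxs⟩, hxT⟩ ⟨⟨y, hys⟩, hyT⟩
    refine reachable_transfer (Q := Q) (U := P \ {w})
      (g := fun z => ((z.1 : (fromEdgeSet (sideEdges Q P)).support) : V)) ?_ ?_ hr
    · intro z₁ z₂ hz
      left
      have hz' : (fromEdgeSet (sideEdges Q P)).Adj z₁.1.1 z₂.1.1 := hz
      rw [fromEdgeSet_adj] at hz'
      exact (mem_sideEdges_mk.1 hz'.1).1
    · intro z
      refine ⟨hsuppsub z.1.2, ?_⟩
      intro hzw
      exact z.2 (Set.mem_singleton_iff.2 (Subtype.ext hzw))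

theorem ncard_four_of_not_triangle {P : Set V} (td : TwoConnData Q P)
    (htri : ¬ IsTriangle (sideEdges Q P)) : 4 ≤ P.ncard := by
  by_contra h4
  have h3 : P.ncard = 3 := by have := td.card3; omega
  obtain ⟨a, b, c, hab, hac, hbc, hP⟩ := Set.ncard_eq_three.1 h3
  have key : ∀ x y z : V, x ≠ y → x ≠ z → y ≠ z → P = {x, y, z} → Q.Adj x y := by
    intro x y z hxy hxz hyz hset
    have hd : P \ {z} = {x, y} := by
      rw [hset]
      ext t
      simp only [Set.mem_diff, Set.mem_insert_iff, Set.mem_singleton_iff]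
      constructor
      · rintro ⟨rfl | rfl | rfl, h⟩ <;> tauto
      · rintro (rfl | rfl)
        · exact ⟨Or.inl rfl, hxz⟩
        · exact ⟨Or.inr (Or.inl rfl), hyz⟩
    have hcd := td.del z
    rw [hd] at hcd
    obtain ⟨e, he, hadj⟩ := hcd.exists_adj (show x ∈ ({x, y} : Set V) from Or.inl rfl)
      (by rw [Set.ncard_pair hxy]; omega)
    rcases he with rfl | rfl
    · exact absurd rfl hadj.ne
    · exact hadj
  have hA1 : Q.Adj a b := key a b c hab hac hbc hP
  have hA2 : Q.Adj b c := key b c a hbc (Ne.symm hab) (Ne.symm hac)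
    (by rw [hP]; ext t; simp only [Set.mem_insert_iff, Set.mem_singleton_iff]; tauto)
  have hA3 : Q.Adj a c := key a c b hac hab (Ne.symm hbc)
    (by rw [hP]; ext t; simp only [Set.mem_insert_iff, Set.mem_singleton_iff]; tauto)
  apply htri
  refine ⟨a, b, c, hab, hac, hbc, ?_⟩
  have haP : a ∈ P := by rw [hP]; exact Or.inl rfl
  have hbP : b ∈ P := by rw [hP]; exact Or.inr (Or.inl rfl)
  have hcP : c ∈ P := by rw [hP]; exact Or.inr (Or.inr rfl)
  ext e
  constructor
  · intro he
    induction e using Sym2.inductionOn with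
    | hf x y =>
      obtain ⟨hadj, hx, hy⟩ := mem_sideEdges_mk.1 he
      rw [hP] at hx hy
      simp only [Set.mem_insert_iff, Set.mem_singleton_iff] at hx hy
      rcases hx with rfl | rfl | rfl <;> rcases hy with rfl | rfl | rfl
      · exact absurd rfl hadj.ne
      · exact mem_triple_iff.2 (Or.inl rfl)
      · exact mem_triple_iff.2 (Or.inr (Or.inr rfl))
      · exact mem_triple_iff.2 (Or.inl Sym2.eq_swap)
      · exact absurd rfl hadj.ne
      · exact mem_triple_iff.2 (Or.inr (Or.inl rfl))
      · exact mem_triple_iff.2 (Or.inr (Or.inr Sym2.eq_swap))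
      · exact mem_triple_iff.2 (Or.inr (Or.inl Sym2.eq_swap))
      · exact absurd rfl hadj.ne
  · intro he
    simp only [Set.mem_insert_iff, Set.mem_singleton_iff] at he
    rcases he with rfl | rfl | rfl
    · exact mem_sideEdges_mk.2 ⟨hA1, haP, hbP⟩
    · exact mem_sideEdges_mk.2 ⟨hA2, hbP, hcP⟩
    · exact mem_sideEdges_mk.2 ⟨hA3, haP, hcP⟩

theorem sideEdges_nonempty_elim {P : Set V} (h : (sideEdges Q P).Nonempty) :
    ∃ x y, Q.Adj x y ∧ x ∈ P ∧ y ∈ P := by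
  obtain ⟨e, he⟩ := h
  induction e using Sym2.inductionOn with
  | hf x y =>
    obtain ⟨h1, h2, h3⟩ := mem_sideEdges_mk.1 he
    exact ⟨x, y, h1, h2, h3⟩

theorem mem_crossEdges_elim {P : Set V} {e : Sym2 V} (h : e ∈ crossEdges Q P) :
    ∃ x y, e = s(x, y) ∧ Q.Adj x y ∧ x ∈ P ∧ y ∉ P := by
  induction e using Sym2.inductionOn with
  | hf x y =>
    rcases mem_crossEdges_mk.1 h with ⟨hadj, ⟨h1, h2⟩ | ⟨h1, h2⟩⟩
    · exact ⟨x, y, rfl, hadj, h1, h2⟩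
    · exact ⟨y, x, Sym2.eq_swap, hadj.symm, h1, h2⟩

theorem one_lt_ncard_of_two {P : Set V} {x y : V} (hx : x ∈ P) (hy : y ∈ P) (hxy : x ≠ y) :
    1 < P.ncard := by
  have hsub : ({x, y} : Set V) ⊆ P := by rintro t (rfl | rfl) <;> assumption
  have := Set.ncard_le_ncard hsub P.toFinite
  rw [Set.ncard_pair hxy] at this
  omega

theorem two_lt_natCard_of_three {W : Type*} [Finite W] {x y z : W} (hxy : x ≠ y) (hxz : x ≠ z)
    (hyz : y ≠ z) : 2 < Nat.card W := by
  have h1 : ({x, y, z} : Set W).ncard = 3 := by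
    rw [Set.ncard_insert_of_notMem (by simp [hxy, hxz]) (Set.toFinite _), Set.ncard_pair hyz]
  have h2 := Set.ncard_le_ncard (Set.subset_univ ({x, y, z} : Set W)) (Set.toFinite _)
  rw [Set.ncard_univ] at h2
  omega

section Contract

variable {u v : V}

theorem contractFun_eq_self (huv : u ≠ v) {x : V} (hx : x ≠ v) :
    contractFun huv x = ⟨x, hx⟩ := by
  unfold contractFun
  exact dif_neg hx

theorem contractFun_v (huv : u ≠ v) : contractFun huv v = ⟨u, huv⟩ := by
  unfold contractFun
  exact dif_pos rfl

theorem coe_contractFun (huv : u ≠ v) {x : V} (hx : x ≠ v) :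
    ((contractFun huv x : {w : V // w ≠ v}) : V) = x := by
  rw [contractFun_eq_self huv hx]

theorem contractFun_coe (huv : u ≠ v) (w : {w : V // w ≠ v}) :
    contractFun huv (w : V) = w := by
  rw [contractFun_eq_self huv w.2]

theorem contractGraph_adj_of {G : SimpleGraph V} (huv : u ≠ v) {x y : V} (hadj : G.Adj x y)
    (hne : contractFun huv x ≠ contractFun huv y) :
    (contractGraph G huv).Adj (contractFun huv x) (contractFun huv y) := by
  unfold contractGraph
  rw [fromEdgeSet_adj]
  exact ⟨⟨s(x, y), G.mem_edgeSet.2 hadj, by rw [Sym2.map_pair_eq]⟩, hne⟩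

theorem contractGraph_adj_elim {G : SimpleGraph V} (huv : u ≠ v) {a' b' : {w : V // w ≠ v}}
    (h : (contractGraph G huv).Adj a' b') :
    a' ≠ b' ∧ ∃ x y, G.Adj x y ∧ contractFun huv x = a' ∧ contractFun huv y = b' := by
  unfold contractGraph at h
  rw [fromEdgeSet_adj] at h
  obtain ⟨⟨e, he, hmap⟩, hne⟩ := h
  refine ⟨hne, ?_⟩
  induction e using Sym2.inductionOn with
  | hf x y =>
    rw [Sym2.map_pair_eq, Sym2.eq_iff] at hmap
    rcases hmap with ⟨h1, h2⟩ | ⟨h1, h2⟩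
    · exact ⟨x, y, G.mem_edgeSet.1 he, h1, h2⟩
    · exact ⟨y, x, (G.mem_edgeSet.1 he).symm, h2, h1⟩

end Contract

theorem good_contract (C : CGraph) (S : Set C.V) (h3 : ThreeConnAlong C.G C.X S)
    (hS3 : 3 ≤ S.ncard) (hScE : (sideEdges C.G Sᶜ).Nonempty)
    {u v : C.V} (hu : u ∈ S) (hv : v ∈ S) (huv : C.G.Adj u v)
    (hstar : ∀ y ∈ Sᶜ, ConnIn C.G (({u, v, y} : Set C.V)ᶜ)) :
    ∃ C', IsProperSCMinor C C' ∧ GoodAlong C' := by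
  classical
  obtain ⟨⟨hSne, hScne, hconnS, hconnSc, hXeq⟩, ⟨hKcard, hKdel⟩, hsep⟩ := h3
  have hne : u ≠ v := huv.ne
  have huvX : s(u, v) ∉ C.X := by rw [hXeq]; exact side_not_cross hu hv
  -- abbreviations (only as statements)
  have hcfS : ∀ x, x ∈ S → ((contractFun hne x : {w : C.V // w ≠ v}) : C.V) ∈ S := by
    intro x hx
    by_cases hxv : x = v
    · subst hxv; rw [contractFun_v]; exact hu
    · rw [coe_contractFun hne hxv]; exact hx
  have hcfSc : ∀ x, x ∉ S → ((contractFun hne x : {w : C.V // w ≠ v}) : C.V) ∉ S := by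
    intro x hx
    have hxv : x ≠ v := fun h => hx (h ▸ hv)
    rw [coe_contractFun hne hxv]; exact hx
  have hadjT : ∀ x y : C.V, C.G.Adj x y →
      (contractGraph C.G hne).Adj (contractFun hne x) (contractFun hne y) ∨
        contractFun hne x = contractFun hne y := by
    intro x y hxy
    by_cases h : contractFun hne x = contractFun hne y
    · exact Or.inr h
    · exact Or.inl (contractGraph_adj_of hne hxy h)
  have transfer : ∀ (U : Set C.V) (U' : Set {w : C.V // w ≠ v}),
      (∀ x ∈ U, contractFun hne x ∈ U') →
      ∀ a b : C.V, ReachIn C.G U a b →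
        ReachIn (contractGraph C.G hne) U' (contractFun hne a) (contractFun hne b) :=
    fun U U' hm a b h =>
      reachIn_transfer (contractFun hne) (fun x y hxy _ _ => hadjT x y hxy) hm h
  obtain ⟨y₀, hy₀⟩ := hScne
  have hy₀v : y₀ ≠ v := fun h => hy₀ (h ▸ hv)
  have hy₀u : y₀ ≠ u := fun h => hy₀ (h ▸ hu)
  obtain ⟨s₀, hs₀S, hs₀uv⟩ : ∃ s₀, s₀ ∈ S ∧ s₀ ∉ ({u, v} : Set C.V) := by
    obtain ⟨t, ht⟩ := diff_pair_nonempty hS3 u v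
    exact ⟨t, ht.1, ht.2⟩
  have hs₀u : s₀ ≠ u := fun h => hs₀uv (Or.inl h)
  have hs₀v : s₀ ≠ v := fun h => hs₀uv (Or.inr h)
  have hCS : ConnIn C.G S := induce_connected_connIn hconnS
  have hCSc : ConnIn C.G Sᶜ := induce_connected_connIn hconnSc
  obtain ⟨r₁, r₂, hr12, hr₁, hr₂⟩ := sideEdges_nonempty_elim hScE
  have hSc2 : 1 < Sᶜ.ncard := one_lt_ncard_of_two hr₁ hr₂ hr12.ne
  have hconn_uv : ConnIn C.G (({u, v} : Set C.V)ᶜ) := by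
    obtain ⟨z₀, hz₀, hz₀adj⟩ := hCSc.exists_adj hy₀ hSc2
    have hz₀y : z₀ ≠ y₀ := hz₀adj.ne'
    have hz₀mem : z₀ ∈ (({u, v, y₀} : Set C.V)ᶜ) := by
      simp only [Set.mem_compl_iff, Set.mem_insert_iff, Set.mem_singleton_iff]
      push_neg
      exact ⟨fun h => hz₀ (h ▸ hu), fun h => hz₀ (h ▸ hv), hz₀y⟩
    have h1 := (hstar y₀ hy₀).insert hz₀mem hz₀adj
    have hins : insert y₀ (({u, v, y₀} : Set C.V)ᶜ) = ({u, v} : Set C.V)ᶜ := by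
      ext t
      simp only [Set.mem_insert_iff, Set.mem_compl_iff, Set.mem_singleton_iff]
      constructor
      · rintro (rfl | ht)
        · push_neg
          exact ⟨hy₀u, hy₀v⟩
        · push_neg at ht ⊢
          exact ⟨ht.1, ht.2.1⟩
      · intro ht
        push_neg at ht
        by_cases hty : t = y₀
        · exact Or.inl hty
        · right
          push_neg
          exact ⟨ht.1, ht.2, hty⟩
    rwa [hins] at h1
  have hKdel' : ∀ w : C.V, ConnIn C.G (({w} : Set C.V)ᶜ) := by
    intro w
    have h := hKdel {w} (by rw [Set.ncard_singleton]; omega)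
    exact induce_connected_connIn h
  have hQconn : ConnIn C.G (Set.univ : Set C.V) := by
    have h := hKdel ∅ (by rw [Set.ncard_empty]; omega)
    rw [Set.compl_empty] at h
    exact induce_connected_connIn h
  -- now build the contraction
  refine ⟨C.contract u v hne, Relation.TransGen.single ?step, ?good⟩
  case step =>
    have : hne = huv.ne := rfl
    rw [this]
    exact SCMStep.contr C u v huv huvX
  case good =>
  show ∃ S'' : Set {w : C.V // w ≠ v},
    ThreeConnAlong (contractGraph C.G hne)
      {e | e ∈ Sym2.map (contractFun hne) '' C.X ∧ ¬ e.IsDiag} S'' ∧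
    (sideEdges (contractGraph C.G hne) S'').Nonempty ∧
    (sideEdges (contractGraph C.G hne) S''ᶜ).Nonempty
  refine ⟨{w : {w : C.V // w ≠ v} | (w : C.V) ∈ S}, ⟨⟨?ne1, ?ne2, ?c1, ?c2, ?xeq⟩,
    ⟨?kcard, ?kdel⟩, ?mixed⟩, ?side1, ?side2⟩
  case ne1 => exact ⟨⟨u, hne⟩, hu⟩
  case ne2 => exact ⟨⟨y₀, hy₀v⟩, hy₀⟩
  case c1 =>
    apply connIn_induce_connected
    refine ⟨⟨⟨u, hne⟩, hu⟩, ?_⟩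
    intro a' ha' b' hb'
    have h := transfer S {w : {w : C.V // w ≠ v} | (w : C.V) ∈ S}
      (fun x hx => hcfS x hx) (a' : C.V) (b' : C.V) (hCS.2 _ ha' _ hb')
    rwa [contractFun_coe hne, contractFun_coe hne] at h
  case c2 =>
    apply connIn_induce_connected
    refine ⟨⟨⟨y₀, hy₀v⟩, hy₀⟩, ?_⟩
    intro a' ha' b' hb'
    have h := transfer Sᶜ ({w : {w : C.V // w ≠ v} | (w : C.V) ∈ S}ᶜ)
      (fun x hx => hcfSc x hx) (a' : C.V) (b' : C.V) (hCSc.2 _ ha' _ hb')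
    rwa [contractFun_coe hne, contractFun_coe hne] at h
  case xeq =>
    ext e'
    constructor
    · rintro ⟨⟨e, heX, hmap⟩, hdiag⟩
      rw [hXeq] at heX
      obtain ⟨x, y, rfl, hadj, hxS, hyS⟩ := mem_crossEdges_elim heX
      rw [Sym2.map_pair_eq] at hmap
      subst hmap
      rw [Sym2.mk_isDiag_iff] at hdiag
      have hadj' := contractGraph_adj_of hne hadj hdiag
      rw [mem_crossEdges_mk]
      exact ⟨hadj', Or.inl ⟨hcfS x hxS, hcfSc y hyS⟩⟩
    · intro he'
      obtain ⟨a', b', he'eq, hadj', ha', hb'⟩ := mem_crossEdges_elim he'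
      obtain ⟨hne'', x, y, hadj, hcx, hcy⟩ := contractGraph_adj_elim hne hadj'
      have hxS : x ∈ S := by
        by_cases hxv : x = v
        · exact hxv ▸ hv
        · have h2 : (a' : C.V) ∈ S := ha'
          rw [← hcx, coe_contractFun hne hxv] at h2
          exact h2
      have hyv : y ≠ v := by
        intro h
        subst h
        apply hb'
        show (b' : C.V) ∈ S
        rw [← hcy, contractFun_v]
        exact hu
      have hySc : y ∉ S := by
        have h2 : (b' : C.V) ∉ S := hb'
        rwa [← hcy, coe_contractFun hne hyv] at h2
      subst he'eq
      refine ⟨⟨s(x, y), ?_, ?_⟩, ?_⟩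
      · rw [hXeq, mem_crossEdges_mk]
        exact ⟨hadj, Or.inl ⟨hxS, hySc⟩⟩
      · rw [Sym2.map_pair_eq, hcx, hcy]
      · rw [Sym2.mk_isDiag_iff]
        exact hne''
  case kcard =>
    have d1 : (⟨u, hne⟩ : {w : C.V // w ≠ v}) ≠ ⟨s₀, hs₀v⟩ :=
      fun h => hs₀u (congrArg Subtype.val h).symm
    have d2 : (⟨u, hne⟩ : {w : C.V // w ≠ v}) ≠ ⟨y₀, hy₀v⟩ :=
      fun h => hy₀u (congrArg Subtype.val h).symm
    have d3 : (⟨s₀, hs₀v⟩ : {w : C.V // w ≠ v}) ≠ ⟨y₀, hy₀v⟩ := by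
      intro h
      have h2 : s₀ = y₀ := congrArg Subtype.val h
      rw [h2] at hs₀S
      exact hy₀ hs₀S
    exact two_lt_natCard_of_three d1 d2 d3
  case kdel =>
    intro T hT
    have hT01 : T.ncard = 0 ∨ T.ncard = 1 := by omega
    rcases hT01 with h0 | h1
    · have hTe : T = ∅ := (Set.ncard_eq_zero (Set.toFinite T)).1 h0
      subst hTe
      rw [Set.compl_empty]
      apply connIn_induce_connected
      refine ⟨⟨⟨u, hne⟩, trivial⟩, ?_⟩
      intro a' _ b' _
      have h := transfer Set.univ Set.univ (fun x _ => trivial) (a' : C.V) (b' : C.V)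
        (hQconn.2 _ trivial _ trivial)
      rwa [contractFun_coe hne, contractFun_coe hne] at h
    · obtain ⟨w, hw⟩ := (Set.ncard_eq_one).1 h1
      subst hw
      by_cases hwub : w = ⟨u, hne⟩
      · subst hwub
        apply connIn_induce_connected
        refine ⟨⟨⟨y₀, hy₀v⟩, fun h => hy₀u (congrArg Subtype.val h)⟩, ?_⟩
        intro a' ha' b' hb'
        have hmm : ∀ x ∈ (({u, v} : Set C.V)ᶜ),
            contractFun hne x ∈ ({(⟨u, hne⟩ : {w : C.V // w ≠ v})} : Set _)ᶜ := by
          intro x hx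
          simp only [Set.mem_compl_iff, Set.mem_insert_iff, Set.mem_singleton_iff] at hx
          push_neg at hx
          intro hc
          rw [Set.mem_singleton_iff] at hc
          have := congrArg Subtype.val hc
          rw [coe_contractFun hne hx.2] at this
          exact hx.1 this
        have hmema : (a' : C.V) ∈ (({u, v} : Set C.V)ᶜ) := by
          simp only [Set.mem_compl_iff, Set.mem_insert_iff, Set.mem_singleton_iff]
          push_neg
          refine ⟨fun h => ?_, a'.2⟩
          exact ha' (Set.mem_singleton_iff.2 (Subtype.ext h))
        have hmemb : (b' : C.V) ∈ (({u, v} : Set C.V)ᶜ) := by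
          simp only [Set.mem_compl_iff, Set.mem_insert_iff, Set.mem_singleton_iff]
          push_neg
          refine ⟨fun h => ?_, b'.2⟩
          exact hb' (Set.mem_singleton_iff.2 (Subtype.ext h))
        have h := transfer _ _ hmm (a' : C.V) (b' : C.V)
          (hconn_uv.2 _ hmema _ hmemb)
        rwa [contractFun_coe hne, contractFun_coe hne] at h
      · apply connIn_induce_connected
        refine ⟨⟨⟨u, hne⟩, fun h => hwub (Set.mem_singleton_iff.1 h).symm⟩, ?_⟩
        intro a' ha' b' hb'
        have hmm : ∀ x ∈ (({(w : C.V)} : Set C.V)ᶜ),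
            contractFun hne x ∈ ({w} : Set {w : C.V // w ≠ v})ᶜ := by
          intro x hx
          intro hc
          rw [Set.mem_singleton_iff] at hc
          by_cases hxv : x = v
          · subst hxv
            rw [contractFun_v] at hc
            exact hwub hc.symm
          · apply hx
            rw [Set.mem_singleton_iff, ← hc, coe_contractFun hne hxv]
        have hmema : (a' : C.V) ∈ (({(w : C.V)} : Set C.V)ᶜ) := by
          intro h
          exact ha' (Set.mem_singleton_iff.2 (Subtype.ext (Set.mem_singleton_iff.1 h)))
        have hmemb : (b' : C.V) ∈ (({(w : C.V)} : Set C.V)ᶜ) := by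
          intro h
          exact hb' (Set.mem_singleton_iff.2 (Subtype.ext (Set.mem_singleton_iff.1 h)))
        have h := transfer _ _ hmm (a' : C.V) (b' : C.V)
          ((hKdel' (w : C.V)).2 _ hmema _ hmemb)
        rwa [contractFun_coe hne, contractFun_coe hne] at h
  case mixed =>
    intro x' hx' y' hy'
    apply reachIn_induce_preconnected
    intro a' ha' b' hb'
    have hy'Sc : (y' : C.V) ∉ S := hy'
    have hy'u : (y' : C.V) ≠ u := fun h => hy'Sc (h ▸ hu)
    simp only [Set.mem_compl_iff, Set.mem_insert_iff, Set.mem_singleton_iff] at ha' hb'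
    push_neg at ha' hb'
    by_cases hx'ub : x' = ⟨u, hne⟩
    · subst hx'ub
      have base := hstar (y' : C.V) hy'Sc
      have hmm : ∀ t ∈ (({u, v, (y' : C.V)} : Set C.V)ᶜ),
          contractFun hne t ∈ (({(⟨u, hne⟩ : {w : C.V // w ≠ v}), y'} : Set _)ᶜ) := by
        intro t ht
        simp only [Set.mem_compl_iff, Set.mem_insert_iff, Set.mem_singleton_iff] at ht ⊢
        push_neg at ht ⊢
        constructor
        · intro hc
          have := congrArg Subtype.val hc
          rw [coe_contractFun hne ht.2.1] at this
          exact ht.1 this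
        · intro hc
          have := congrArg Subtype.val hc
          rw [coe_contractFun hne ht.2.1] at this
          exact ht.2.2 this
      have hmema : (a' : C.V) ∈ (({u, v, (y' : C.V)} : Set C.V)ᶜ) := by
        simp only [Set.mem_compl_iff, Set.mem_insert_iff, Set.mem_singleton_iff]
        push_neg
        exact ⟨fun h => ha'.1 (Subtype.ext h), a'.2, fun h => ha'.2 (Subtype.ext h)⟩
      have hmemb : (b' : C.V) ∈ (({u, v, (y' : C.V)} : Set C.V)ᶜ) := by
        simp only [Set.mem_compl_iff, Set.mem_insert_iff, Set.mem_singleton_iff]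
        push_neg
        exact ⟨fun h => hb'.1 (Subtype.ext h), b'.2, fun h => hb'.2 (Subtype.ext h)⟩
      have h := transfer _ _ hmm (a' : C.V) (b' : C.V)
        (base.2 _ hmema _ hmemb)
      rwa [contractFun_coe hne, contractFun_coe hne] at h
    · have hx'S : (x' : C.V) ∈ S := hx'
      have hxu : (x' : C.V) ≠ u := fun h => hx'ub (Subtype.ext h)
      have base : ∀ p ∈ (({(x' : C.V), (y' : C.V)} : Set C.V)ᶜ),
          ∀ q ∈ (({(x' : C.V), (y' : C.V)} : Set C.V)ᶜ),
          ReachIn C.G (({(x' : C.V), (y' : C.V)} : Set C.V)ᶜ) p q := by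
        intro p hp q hq
        exact induce_preconnected_reachIn (hsep (x' : C.V) hx'S (y' : C.V) hy'Sc) hp hq
      have hmm : ∀ t ∈ (({(x' : C.V), (y' : C.V)} : Set C.V)ᶜ),
          contractFun hne t ∈ (({x', y'} : Set {w : C.V // w ≠ v})ᶜ) := by
        intro t ht
        simp only [Set.mem_compl_iff, Set.mem_insert_iff, Set.mem_singleton_iff] at ht ⊢
        push_neg at ht ⊢
        by_cases htv : t = v
        · subst htv
          rw [contractFun_v]
          constructor
          · intro hc
            exact hxu (congrArg Subtype.val hc).symm
          · intro hc
            exact hy'u (congrArg Subtype.val hc).symm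
        · rw [contractFun_eq_self hne htv]
          constructor
          · intro hc
            exact ht.1 (congrArg Subtype.val hc)
          · intro hc
            exact ht.2 (congrArg Subtype.val hc)
      have hmema : (a' : C.V) ∈ (({(x' : C.V), (y' : C.V)} : Set C.V)ᶜ) := by
        simp only [Set.mem_compl_iff, Set.mem_insert_iff, Set.mem_singleton_iff]
        push_neg
        exact ⟨fun h => ha'.1 (Subtype.ext h), fun h => ha'.2 (Subtype.ext h)⟩
      have hmemb : (b' : C.V) ∈ (({(x' : C.V), (y' : C.V)} : Set C.V)ᶜ) := by
        simp only [Set.mem_compl_iff, Set.mem_insert_iff, Set.mem_singleton_iff]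
        push_neg
        exact ⟨fun h => hb'.1 (Subtype.ext h), fun h => hb'.2 (Subtype.ext h)⟩
      have h := transfer _ _ hmm (a' : C.V) (b' : C.V)
        (base _ hmema _ hmemb)
      rwa [contractFun_coe hne, contractFun_coe hne] at h
  case side1 =>
    obtain ⟨s₁, hs₁S, hs₁adj⟩ := hCS.exists_adj hs₀S (by omega)
    have hs₀s₁ : s₀ ≠ s₁ := hs₁adj.ne
    have hcne : contractFun hne s₀ ≠ contractFun hne s₁ := by
      intro h
      have := congrArg Subtype.val h
      rw [coe_contractFun hne hs₀v] at this
      by_cases hs₁v : s₁ = v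
      · subst hs₁v
        rw [contractFun_v] at h
        have h2 := congrArg Subtype.val h
        rw [coe_contractFun hne hs₀v] at h2
        exact hs₀u h2
      · rw [coe_contractFun hne hs₁v] at this
        exact hs₀s₁ this
    refine ⟨s(contractFun hne s₀, contractFun hne s₁), mem_sideEdges_mk.2
      ⟨contractGraph_adj_of hne hs₁adj hcne, hcfS s₀ hs₀S, hcfS s₁ hs₁S⟩⟩
  case side2 =>
    have hr₁v : r₁ ≠ v := fun h => hr₁ (h ▸ hv)
    have hr₂v : r₂ ≠ v := fun h => hr₂ (h ▸ hv)
    have hcne : contractFun hne r₁ ≠ contractFun hne r₂ := by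
      intro h
      have := congrArg Subtype.val h
      rw [coe_contractFun hne hr₁v, coe_contractFun hne hr₂v] at this
      exact hr12.ne this
    refine ⟨s(contractFun hne r₁, contractFun hne r₂), mem_sideEdges_mk.2
      ⟨contractGraph_adj_of hne hr12 hcne, hcfSc r₁ hr₁, hcfSc r₂ hr₂⟩⟩

theorem threeConnAlong_compl {Q : SimpleGraph V} {X : Set (Sym2 V)} {S : Set V}
    (h : ThreeConnAlong Q X S) : ThreeConnAlong Q X Sᶜ := by
  obtain ⟨⟨h1, h2, h3, h4, h5⟩, hK, hsep⟩ := h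
  refine ⟨⟨h2, by rwa [compl_compl], h4, by rw [compl_compl]; exact h3,
    h5.trans crossEdges_compl.symm⟩, hK, ?_⟩
  intro x hx y hy
  rw [compl_compl] at hy
  have h6 := hsep y hy x hx
  rwa [Set.pair_comm] at h6

theorem compl_triple_split {P : Set V} {a b yy : V} (ha : a ∈ P) (hb : b ∈ P) (hyy : yy ∉ P) :
    ({a, b, yy} : Set V)ᶜ = (P \ {a, b}) ∪ (Pᶜ \ {yy}) := by
  ext t
  simp only [Set.mem_compl_iff, Set.mem_insert_iff, Set.mem_singleton_iff, Set.mem_union,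
    Set.mem_diff]
  constructor
  · intro ht
    push_neg at ht
    by_cases htP : t ∈ P
    · refine Or.inl ⟨htP, ?_⟩
      push_neg
      exact ⟨ht.1, ht.2.1⟩
    · exact Or.inr ⟨htP, ht.2.2⟩
  · rintro (⟨htP, hab⟩ | ⟨htP, hty⟩)
    · push_neg at hab
      push_neg
      exact ⟨hab.1, hab.2, fun h => hyy (h ▸ htP)⟩
    · push_neg
      exact ⟨fun h => htP (h ▸ ha), fun h => htP (h ▸ hb), hty⟩

theorem mkStar {P : Set V} {a b : V} (ha : a ∈ P) (hb : b ∈ P)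
    (hconn : ConnIn Q (P \ {a, b}))
    (hRd : ∀ yy ∈ Pᶜ, ConnIn Q (Pᶜ \ {yy}))
    (hatt : ∀ yy ∈ Pᶜ, ∃ s t, s ∈ P \ {a, b} ∧ t ∈ Pᶜ \ {yy} ∧ Q.Adj s t) :
    ∀ yy ∈ Pᶜ, ConnIn Q (({a, b, yy} : Set V)ᶜ) := by
  intro yy hyy
  rw [compl_triple_split ha hb hyy]
  obtain ⟨s, t, hs, ht, hadj⟩ := hatt yy hyy
  exact hconn.union (hRd yy hyy) hs ht hadj

theorem main_lemma (C : CGraph) (S : Set C.V) (h : ThreeConnAlong C.G C.X S)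
    (hL : (sideEdges C.G S).Nonempty) (hR : (sideEdges C.G Sᶜ).Nonempty)
    (hL2 : KConnected 2 (edgeSubgraph (sideEdges C.G S)))
    (hLt : ¬ IsTriangle (sideEdges C.G S))
    (hR2 : KConnected 2 (edgeSubgraph (sideEdges C.G Sᶜ)) ∨
      IsSingleEdge (sideEdges C.G Sᶜ)) :
    ¬ BondIrreducible C := by
  classical
  rintro ⟨-, hno⟩
  apply hno
  have h3 := h
  obtain ⟨⟨hSne, hScne, hconnS, hconnSc, hXeq⟩, ⟨hKcard, hKdel⟩, hsep⟩ := h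
  have hCS : ConnIn C.G S := induce_connected_connIn hconnS
  have hCSc : ConnIn C.G Sᶜ := induce_connected_connIn hconnSc
  have tdS : TwoConnData C.G S := twoConnData_of_KConnected hCS hL2
  have hS4 : 4 ≤ S.ncard := ncard_four_of_not_triangle tdS hLt
  have hsepR : ∀ x ∈ S, ∀ y ∈ Sᶜ, ∀ p ∈ (({x, y} : Set C.V)ᶜ), ∀ q ∈ (({x, y} : Set C.V)ᶜ),
      ReachIn C.G (({x, y} : Set C.V)ᶜ) p q :=
    fun x hx y hy p hp q hq => induce_preconnected_reachIn (hsep x hx y hy) hp hq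
  have hmempair : ∀ (x y t : C.V), t ≠ x → t ≠ y → t ∈ (({x, y} : Set C.V)ᶜ) := by
    intro x y t h1 h2
    simp only [Set.mem_compl_iff, Set.mem_insert_iff, Set.mem_singleton_iff]
    push_neg
    exact ⟨h1, h2⟩
  have hnepair : ∀ (x y t : C.V), t ∈ (({x, y} : Set C.V)ᶜ) → t ≠ x ∧ t ≠ y := by
    intro x y t ht
    simp only [Set.mem_compl_iff, Set.mem_insert_iff, Set.mem_singleton_iff] at ht
    push_neg at ht
    exact ht
  rcases hR2 with hRK | hRsingle
  · -- right side 2-connected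
    have tdR : TwoConnData C.G Sᶜ := twoConnData_of_KConnected hCSc hRK
    have hSc3 : 3 ≤ Sᶜ.ncard := tdR.card3
    have hG1 : ∀ x ∈ S, ∀ y₀ ∈ Sᶜ, ∃ s t, C.G.Adj s t ∧ s ∈ S ∧ s ≠ x ∧ t ∈ Sᶜ ∧ t ≠ y₀ := by
      intro x hx y₀ hy₀
      obtain ⟨s₀, hs₀, hs₀x⟩ := Set.exists_ne_of_one_lt_ncard (show 1 < S.ncard by omega) x
      obtain ⟨t₀, ht₀, ht₀y⟩ := Set.exists_ne_of_one_lt_ncard (show 1 < Sᶜ.ncard by omega) y₀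
      have hs₀m : s₀ ∈ (({x, y₀} : Set C.V)ᶜ) :=
        hmempair _ _ _ hs₀x (fun h2 => hy₀ (h2 ▸ hs₀))
      have ht₀m : t₀ ∈ (({x, y₀} : Set C.V)ᶜ) :=
        hmempair _ _ _ (fun h2 => ht₀ (h2 ▸ hx)) ht₀y
      have hreach := hsepR x hx y₀ hy₀ s₀ hs₀m t₀ ht₀m
      obtain ⟨p, hp, q, hq, hadj⟩ := hreach.crossing (P := S) hs₀ ht₀
      exact ⟨p, q, hadj, hp.2, (hnepair _ _ _ hp.1).1, hq.2, (hnepair _ _ _ hq.1).2⟩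
    have mkStarL : ∀ aa bb : C.V, aa ∈ S → bb ∈ S →
        ConnIn C.G (S \ {aa, bb}) →
        (∀ yy ∈ Sᶜ, ∃ s t, s ∈ S \ {aa, bb} ∧ t ∈ Sᶜ \ {yy} ∧ C.G.Adj s t) →
        ∀ yy ∈ Sᶜ, ConnIn C.G (({aa, bb, yy} : Set C.V)ᶜ) := by
      intro aa bb ha hb hconn hatt
      exact mkStar ha hb hconn (fun yy _ => tdR.del yy) hatt
    by_cases hrich : ∃ w t₁ t₂ : C.V, w ∈ S ∧ t₁ ∈ Sᶜ ∧ t₂ ∈ Sᶜ ∧ t₁ ≠ t₂ ∧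
        C.G.Adj w t₁ ∧ C.G.Adj w t₂
    · obtain ⟨w, t₁, t₂, hwS, ht₁, ht₂, ht12, hadj₁, hadj₂⟩ := hrich
      obtain ⟨aa, bb, haS, hbS, haw, hbw, hab, hconnab⟩ := exists_contractible_avoid tdS hS4 hwS
      refine good_contract C S h3 (by omega) hR haS hbS hab
        (mkStarL aa bb haS hbS hconnab ?_)
      intro yy hyy
      have hwmem : w ∈ S \ {aa, bb} := ⟨hwS, by
        simp only [Set.mem_insert_iff, Set.mem_singleton_iff]
        push_neg
        exact ⟨Ne.symm haw, Ne.symm hbw⟩⟩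
      by_cases h1 : t₁ = yy
      · exact ⟨w, t₂, hwmem, ⟨ht₂, fun h2 => ht12 (h1.trans h2.symm)⟩, hadj₂⟩
      · exact ⟨w, t₁, hwmem, ⟨ht₁, h1⟩, hadj₁⟩
    · by_cases hrichR : ∃ t s₁ s₂ : C.V, t ∈ Sᶜ ∧ s₁ ∈ S ∧ s₂ ∈ S ∧ s₁ ≠ s₂ ∧
          C.G.Adj t s₁ ∧ C.G.Adj t s₂
      · obtain ⟨t, s₁, s₂, htSc, hs₁, hs₂, hs12, hadj₁, hadj₂⟩ := hrichR
        have h3c := threeConnAlong_compl h3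
        have hedge : ∃ aa bb : C.V, aa ∈ Sᶜ ∧ bb ∈ Sᶜ ∧ aa ≠ t ∧ bb ≠ t ∧ C.G.Adj aa bb ∧
            ConnIn C.G (Sᶜ \ {aa, bb}) := by
          by_cases h4c : 4 ≤ Sᶜ.ncard
          · obtain ⟨aa, bb, m1, m2, m3, m4, m5, m6⟩ := exists_contractible_avoid tdR h4c htSc
            exact ⟨aa, bb, m1, m2, m3, m4, m5, m6⟩
          · have hd2 : (Sᶜ \ {t}).ncard = 2 := by
              rw [Set.ncard_diff_singleton_of_mem htSc]
              omega
            obtain ⟨p, q, hpq, hpqEq⟩ := Set.ncard_eq_two.1 hd2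
            have hpmem : p ∈ Sᶜ \ {t} := by rw [hpqEq]; exact Or.inl rfl
            have hqmem : q ∈ Sᶜ \ {t} := by rw [hpqEq]; exact Or.inr rfl
            obtain ⟨cc, hcc, hadjpc⟩ := (tdR.del t).exists_adj hpmem (by omega)
            have hcq : cc = q := by
              have hcc2 : cc ∈ ({p, q} : Set C.V) := by rw [← hpqEq]; exact hcc
              rcases hcc2 with rfl | rfl
              · exact absurd rfl hadjpc.ne
              · rfl
            subst hcq
            have hsing : Sᶜ \ {p, cc} = {t} := by
              ext x
              simp only [Set.mem_diff, Set.mem_insert_iff, Set.mem_singleton_iff]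
              constructor
              · rintro ⟨hx, hnpq⟩
                push_neg at hnpq
                by_contra hxt
                have hx2 : x ∈ Sᶜ \ {t} := ⟨hx, hxt⟩
                rw [hpqEq] at hx2
                rcases hx2 with rfl | rfl
                · exact hnpq.1 rfl
                · exact hnpq.2 rfl
              · rintro rfl
                refine ⟨htSc, ?_⟩
                push_neg
                constructor
                · intro h2
                  exact hpmem.2 (Set.mem_singleton_iff.2 h2.symm)
                · intro h2
                  exact hqmem.2 (Set.mem_singleton_iff.2 h2.symm)
            refine ⟨p, cc, hpmem.1, hqmem.1, ?_, ?_, hadjpc, ?_⟩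
            · intro h2
              exact hpmem.2 (Set.mem_singleton_iff.2 h2)
            · intro h2
              exact hqmem.2 (Set.mem_singleton_iff.2 h2)
            · rw [hsing]
              exact connIn_singleton t
        obtain ⟨aa, bb, haSc, hbSc, hat, hbt, habadj, hconnab⟩ := hedge
        have hstar' : ∀ x ∈ Sᶜᶜ, ConnIn C.G (({aa, bb, x} : Set C.V)ᶜ) := by
          apply mkStar haSc hbSc hconnab
          · intro yy hyy
            have hyyS : yy ∈ S := by simpa using hyy
            have h5 : Sᶜᶜ \ {yy} = S \ {yy} := by rw [compl_compl]
            rw [h5]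
            exact tdS.del yy
          · intro yy hyy
            have hyyS : yy ∈ S := by simpa using hyy
            have htmem : t ∈ Sᶜ \ {aa, bb} := ⟨htSc, by
              simp only [Set.mem_insert_iff, Set.mem_singleton_iff]
              push_neg
              exact ⟨Ne.symm hat, Ne.symm hbt⟩⟩
            by_cases h1 : s₁ = yy
            · refine ⟨t, s₂, htmem, ⟨by simpa using hs₂, fun h2 => hs12 (h1.trans h2.symm)⟩, hadj₂⟩
            · refine ⟨t, s₁, htmem, ⟨by simpa using hs₁, h1⟩, hadj₁⟩
        refine good_contract C Sᶜ h3c hSc3 ?_ haSc hbSc habadj hstar'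
        rw [compl_compl]
        exact hL
      · by_cases hcrossless : ∃ m ∈ S, ∀ t ∈ Sᶜ, ¬ C.G.Adj m t
        · obtain ⟨m, hmS, hmno⟩ := hcrossless
          obtain ⟨w, hwS, hmw, hconnmw⟩ := exists_contractible tdS hmS
          obtain ⟨yy₁, hyy₁⟩ := hScne
          obtain ⟨sA, tA, hadjA, hsA, hsAw, htA, htAy⟩ := hG1 w hwS yy₁ hyy₁
          obtain ⟨sB, tB, hadjB, hsB, hsBw, htB, htBy⟩ := hG1 w hwS tA htA
          have hsAm : sA ≠ m := fun hh => hmno tA htA (hh ▸ hadjA)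
          have hsBm : sB ≠ m := fun hh => hmno tB htB (hh ▸ hadjB)
          refine good_contract C S h3 (by omega) hR hmS hwS hmw
            (mkStarL m w hmS hwS hconnmw ?_)
          intro yy hyy
          by_cases hA : tA = yy
          · refine ⟨sB, tB, ⟨hsB, ?_⟩, ⟨htB, fun h2 => htBy (h2.trans hA.symm)⟩, hadjB⟩
            simp only [Set.mem_insert_iff, Set.mem_singleton_iff]
            push_neg
            exact ⟨hsBm, hsBw⟩
          · refine ⟨sA, tA, ⟨hsA, ?_⟩, ⟨htA, hA⟩, hadjA⟩
            simp only [Set.mem_insert_iff, Set.mem_singleton_iff]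
            push_neg
            exact ⟨hsAm, hsAw⟩
        · push_neg at hcrossless
          obtain ⟨m₀, hm₀⟩ := hSne
          obtain ⟨w, hwS, hmw, hconnmw⟩ := exists_contractible tdS hm₀
          obtain ⟨s₁, hs₁⟩ := diff_pair_nonempty (P := S) (by omega) m₀ w
          obtain ⟨s₂, hs₂, hs21⟩ := Set.exists_ne_of_one_lt_ncard (diff_pair_one_lt hS4 m₀ w) s₁
          obtain ⟨t₁, ht₁, hadj₁⟩ := hcrossless s₁ hs₁.1
          obtain ⟨t₂, ht₂, hadj₂⟩ := hcrossless s₂ hs₂.1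
          have ht12 : t₁ ≠ t₂ := by
            intro hh
            subst hh
            exact hrichR ⟨t₁, s₁, s₂, ht₁, hs₁.1, hs₂.1, Ne.symm hs21, hadj₁.symm, hadj₂.symm⟩
          refine good_contract C S h3 (by omega) hR hm₀ hwS hmw
            (mkStarL m₀ w hm₀ hwS hconnmw ?_)
          intro yy hyy
          by_cases hA : t₁ = yy
          · exact ⟨s₂, t₂, hs₂, ⟨ht₂, fun h2 => ht12 (hA.trans h2.symm)⟩, hadj₂⟩
          · exact ⟨s₁, t₁, hs₁, ⟨ht₁, hA⟩, hadj₁⟩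
  · -- right side a single edge
    obtain ⟨y, z, hyz, hEq⟩ := hRsingle
    have hyzedge : s(y, z) ∈ sideEdges C.G Sᶜ := by rw [hEq]; rfl
    obtain ⟨hadjyz, hySc, hzSc⟩ := mem_sideEdges_mk.1 hyzedge
    have hScEq : Sᶜ = {y, z} := by
      apply Set.Subset.antisymm
      · intro cv hc
        by_contra hcyz
        simp only [Set.mem_insert_iff, Set.mem_singleton_iff] at hcyz
        push_neg at hcyz
        obtain ⟨c', hc', hadjc⟩ := hCSc.exists_adj hc (one_lt_ncard_of_two hySc hzSc hyz)
        have hmem : s(cv, c') ∈ sideEdges C.G Sᶜ := mem_sideEdges_mk.2 ⟨hadjc, hc, hc'⟩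
        rw [hEq, Set.mem_singleton_iff, Sym2.eq_iff] at hmem
        rcases hmem with ⟨h1, h2⟩ | ⟨h1, h2⟩
        · exact hcyz.1 h1
        · exact hcyz.2 h1
      · rintro cv (rfl | rfl)
        · exact hySc
        · exact hzSc
    have hZn : ∀ x ∈ S, ∃ s, s ∈ S ∧ s ≠ x ∧ C.G.Adj z s := by
      intro x hx
      obtain ⟨s₀, hs₀, hs₀x⟩ := Set.exists_ne_of_one_lt_ncard (show 1 < S.ncard by omega) x
      have hzx : z ≠ x := fun h2 => hzSc (h2 ▸ hx)
      have hreach := hsepR x hx y hySc z (hmempair _ _ _ hzx (Ne.symm hyz)) s₀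
        (hmempair _ _ _ hs₀x (fun h2 => hySc (h2 ▸ hs₀)))
      obtain ⟨p, hp, q, hq, hadj⟩ := hreach.crossing (P := ({z} : Set C.V)) rfl
        (fun h2 => hzSc ((Set.mem_singleton_iff.1 h2) ▸ hs₀))
      have hpz : p = z := Set.mem_singleton_iff.1 hp.2
      have hadj2 : C.G.Adj z q := hpz ▸ hadj
      have hqS : q ∈ S := by
        by_contra hqS2
        have hq2 : q ∈ ({y, z} : Set C.V) := by rw [← hScEq]; exact hqS2
        rcases hq2 with h8 | h8
        · exact (hnepair _ _ _ hq.1).2 h8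
        · exact hq.2 (Set.mem_singleton_iff.2 h8)
      exact ⟨q, hqS, (hnepair _ _ _ hq.1).1, hadj2⟩
    have hYn : ∀ x ∈ S, ∃ s, s ∈ S ∧ s ≠ x ∧ C.G.Adj y s := by
      intro x hx
      obtain ⟨s₀, hs₀, hs₀x⟩ := Set.exists_ne_of_one_lt_ncard (show 1 < S.ncard by omega) x
      have hyx : y ≠ x := fun h2 => hySc (h2 ▸ hx)
      have hreach := hsepR x hx z hzSc y (hmempair _ _ _ hyx hyz) s₀
        (hmempair _ _ _ hs₀x (fun h2 => hzSc (h2 ▸ hs₀)))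
      obtain ⟨p, hp, q, hq, hadj⟩ := hreach.crossing (P := ({y} : Set C.V)) rfl
        (fun h2 => hySc ((Set.mem_singleton_iff.1 h2) ▸ hs₀))
      have hpy : p = y := Set.mem_singleton_iff.1 hp.2
      have hadj2 : C.G.Adj y q := hpy ▸ hadj
      have hqS : q ∈ S := by
        by_contra hqS2
        have hq2 : q ∈ ({y, z} : Set C.V) := by rw [← hScEq]; exact hqS2
        rcases hq2 with h8 | h8
        · exact hq.2 (Set.mem_singleton_iff.2 h8)
        · exact (hnepair _ _ _ hq.1).2 h8
      exact ⟨q, hqS, (hnepair _ _ _ hq.1).1, hadj2⟩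
    have hRdel : ∀ yy ∈ Sᶜ, ConnIn C.G (Sᶜ \ {yy}) := by
      intro yy hyy
      have hyyor : yy = y ∨ yy = z := by rw [hScEq] at hyy; simpa using hyy
      rcases hyyor with h7 | h7
      · have h5 : Sᶜ \ {yy} = {z} := by
          rw [hScEq, h7]
          ext t
          simp only [Set.mem_diff, Set.mem_insert_iff, Set.mem_singleton_iff]
          constructor
          · rintro ⟨h8 | h8, h6⟩
            · exact absurd h8 h6
            · exact h8
          · intro h8
            exact ⟨Or.inr h8, fun h9 => hyz (h9.symm.trans h8)⟩
        rw [h5]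
        exact connIn_singleton z
      · have h5 : Sᶜ \ {yy} = {y} := by
          rw [hScEq, h7]
          ext t
          simp only [Set.mem_diff, Set.mem_insert_iff, Set.mem_singleton_iff]
          constructor
          · rintro ⟨h8 | h8, h6⟩
            · exact h8
            · exact absurd h8 h6
          · intro h8
            exact ⟨Or.inl h8, fun h9 => hyz (h8.symm.trans h9)⟩
        rw [h5]
        exact connIn_singleton y
    by_cases hboth : ∃ w, w ∈ S ∧ C.G.Adj y w ∧ C.G.Adj z w
    · obtain ⟨w, hwS, hwy, hwz⟩ := hboth
      obtain ⟨aa, bb, haS, hbS, haw, hbw, hab, hconnab⟩ := exists_contractible_avoid tdS hS4 hwS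
      refine good_contract C S h3 (by omega) hR haS hbS hab
        (mkStar haS hbS hconnab hRdel ?_)
      intro yy hyy
      have hwmem : w ∈ S \ {aa, bb} := ⟨hwS, by
        simp only [Set.mem_insert_iff, Set.mem_singleton_iff]
        push_neg
        exact ⟨Ne.symm haw, Ne.symm hbw⟩⟩
      have hyyor : yy = y ∨ yy = z := by rw [hScEq] at hyy; simpa using hyy
      rcases hyyor with rfl | rfl
      · exact ⟨w, z, hwmem, ⟨hzSc, Ne.symm hyz⟩, hwz.symm⟩
      · exact ⟨w, y, hwmem, ⟨hySc, hyz⟩, hwy.symm⟩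
    · by_cases hm : ∃ m, m ∈ S ∧ ¬ C.G.Adj y m ∧ ¬ C.G.Adj z m
      · obtain ⟨m, hmS, hmy, hmz⟩ := hm
        obtain ⟨w, hwS, hmw, hconnmw⟩ := exists_contractible tdS hmS
        obtain ⟨sy, hsyS, hsyw, hadjy⟩ := hYn w hwS
        obtain ⟨sz, hszS, hszw, hadjz⟩ := hZn w hwS
        have hsym : sy ≠ m := fun h2 => hmy (by rw [← h2]; exact hadjy)
        have hszm : sz ≠ m := fun h2 => hmz (by rw [← h2]; exact hadjz)
        refine good_contract C S h3 (by omega) hR hmS hwS hmw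
          (mkStar hmS hwS hconnmw hRdel ?_)
        intro yy hyy
        have hyyor : yy = y ∨ yy = z := by rw [hScEq] at hyy; simpa using hyy
        rcases hyyor with rfl | rfl
        · refine ⟨sz, z, ⟨hszS, ?_⟩, ⟨hzSc, Ne.symm hyz⟩, hadjz.symm⟩
          simp only [Set.mem_insert_iff, Set.mem_singleton_iff]
          push_neg
          exact ⟨hszm, hszw⟩
        · refine ⟨sy, y, ⟨hsyS, ?_⟩, ⟨hySc, hyz⟩, hadjy.symm⟩
          simp only [Set.mem_insert_iff, Set.mem_singleton_iff]
          push_neg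
          exact ⟨hsym, hsyw⟩
      · push_neg at hm
        obtain ⟨m₀, hm₀⟩ := hSne
        obtain ⟨y₁, hy₁S, _, hy₁adj⟩ := hYn m₀ hm₀
        obtain ⟨y₂, hy₂S, hy₂1, hy₂adj⟩ := hYn y₁ hy₁S
        obtain ⟨z₁, hz₁S, _, hz₁adj⟩ := hZn m₀ hm₀
        obtain ⟨z₂, hz₂S, hz₂1, hz₂adj⟩ := hZn z₁ hz₁S
        by_cases hY3 : 3 ≤ ({s | s ∈ S ∧ C.G.Adj y s} : Set C.V).ncard
        · obtain ⟨w, hwS, hmwadj, hconnmw⟩ := exists_contractible tdS hy₁S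
          obtain ⟨y₃, hy₃⟩ := diff_pair_nonempty hY3 y₁ w
          obtain ⟨sz, hszS, hszw, hadjz⟩ := hZn w hwS
          have hszy₁ : sz ≠ y₁ := fun h2 =>
            hboth ⟨sz, hszS, by rw [h2]; exact hy₁adj, hadjz⟩
          refine good_contract C S h3 (by omega) hR hy₁S hwS hmwadj
            (mkStar hy₁S hwS hconnmw hRdel ?_)
          intro yy hyy
          have hyyor : yy = y ∨ yy = z := by rw [hScEq] at hyy; simpa using hyy
          rcases hyyor with rfl | rfl
          · refine ⟨sz, z, ⟨hszS, ?_⟩, ⟨hzSc, Ne.symm hyz⟩, hadjz.symm⟩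
            simp only [Set.mem_insert_iff, Set.mem_singleton_iff]
            push_neg
            exact ⟨hszy₁, hszw⟩
          · exact ⟨y₃, y, ⟨hy₃.1.1, hy₃.2⟩, ⟨hySc, hyz⟩, hy₃.1.2.symm⟩
        · by_cases hZ3 : 3 ≤ ({s | s ∈ S ∧ C.G.Adj z s} : Set C.V).ncard
          · obtain ⟨w, hwS, hmwadj, hconnmw⟩ := exists_contractible tdS hz₁S
            obtain ⟨z₃, hz₃⟩ := diff_pair_nonempty hZ3 z₁ w
            obtain ⟨sy, hsyS, hsyw, hadjy⟩ := hYn w hwS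
            have hsyz₁ : sy ≠ z₁ := fun h2 =>
              hboth ⟨sy, hsyS, hadjy, by rw [h2]; exact hz₁adj⟩
            refine good_contract C S h3 (by omega) hR hz₁S hwS hmwadj
              (mkStar hz₁S hwS hconnmw hRdel ?_)
            intro yy hyy
            have hyyor : yy = y ∨ yy = z := by rw [hScEq] at hyy; simpa using hyy
            rcases hyyor with rfl | rfl
            · exact ⟨z₃, z, ⟨hz₃.1.1, hz₃.2⟩, ⟨hzSc, Ne.symm hyz⟩, hz₃.1.2.symm⟩
            · refine ⟨sy, y, ⟨hsyS, ?_⟩, ⟨hySc, hyz⟩, hadjy.symm⟩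
              simp only [Set.mem_insert_iff, Set.mem_singleton_iff]
              push_neg
              exact ⟨hsyz₁, hsyw⟩
          · have hYeq : ({s | s ∈ S ∧ C.G.Adj y s} : Set C.V).ncard = 2 := by
              have h2 : 1 < ({s | s ∈ S ∧ C.G.Adj y s} : Set C.V).ncard :=
                one_lt_ncard_of_two (x := y₁) (y := y₂) ⟨hy₁S, hy₁adj⟩ ⟨hy₂S, hy₂adj⟩
                  (Ne.symm hy₂1)
              omega
            have hZeq : ({s | s ∈ S ∧ C.G.Adj z s} : Set C.V).ncard = 2 := by
              have h2 : 1 < ({s | s ∈ S ∧ C.G.Adj z s} : Set C.V).ncard :=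
                one_lt_ncard_of_two (x := z₁) (y := z₂) ⟨hz₁S, hz₁adj⟩ ⟨hz₂S, hz₂adj⟩
                  (Ne.symm hz₂1)
              omega
            obtain ⟨a₁, a₂, ha12, hYpair⟩ := Set.ncard_eq_two.1 hYeq
            obtain ⟨b₁, b₂, hb12, hZpair⟩ := Set.ncard_eq_two.1 hZeq
            have ha₁ : a₁ ∈ ({s | s ∈ S ∧ C.G.Adj y s} : Set C.V) := by
              rw [hYpair]; exact Or.inl rfl
            have ha₂ : a₂ ∈ ({s | s ∈ S ∧ C.G.Adj y s} : Set C.V) := by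
              rw [hYpair]; exact Or.inr rfl
            have hb₁ : b₁ ∈ ({s | s ∈ S ∧ C.G.Adj z s} : Set C.V) := by
              rw [hZpair]; exact Or.inl rfl
            have hb₂ : b₂ ∈ ({s | s ∈ S ∧ C.G.Adj z s} : Set C.V) := by
              rw [hZpair]; exact Or.inr rfl
            have hYZne : ∀ i j : C.V, i ∈ ({s | s ∈ S ∧ C.G.Adj y s} : Set C.V) →
                j ∈ ({s | s ∈ S ∧ C.G.Adj z s} : Set C.V) → i ≠ j := by
              intro i j hi hj h2
              exact hboth ⟨i, hi.1, hi.2, by rw [h2]; exact hj.2⟩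
            have hSeq : S = {a₁, a₂, b₁, b₂} := by
              apply Set.Subset.antisymm
              · intro s hs
                by_cases hys : C.G.Adj y s
                · have h2 : s ∈ ({a₁, a₂} : Set C.V) := by rw [← hYpair]; exact ⟨hs, hys⟩
                  rcases h2 with rfl | rfl
                  · exact Or.inl rfl
                  · exact Or.inr (Or.inl rfl)
                · have h2 : s ∈ ({b₁, b₂} : Set C.V) := by
                    rw [← hZpair]; exact ⟨hs, hm s hs hys⟩
                  rcases h2 with rfl | rfl
                  · exact Or.inr (Or.inr (Or.inl rfl))
                  · exact Or.inr (Or.inr (Or.inr rfl))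
              · rintro s (rfl | rfl | rfl | rfl)
                · exact ha₁.1
                · exact ha₂.1
                · exact hb₁.1
                · exact hb₂.1
            have hdeg : ∀ s ∈ S, ∀ w' : C.V, s ≠ w' → ∃ cc ∈ S \ {w'}, C.G.Adj s cc :=
              fun s hs w' hsw => tdS.exists_nbr_avoid hs w' hsw
            have hnbr : ∀ s ∈ S, ∀ w' : C.V, s ≠ w' →
                ∃ cc, (cc = a₁ ∨ cc = a₂ ∨ cc = b₁ ∨ cc = b₂) ∧ cc ≠ w' ∧ cc ≠ s ∧
                  C.G.Adj s cc := by
              intro s hs w' hsw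
              obtain ⟨cc, hcc, hadjcc⟩ := hdeg s hs w' hsw
              refine ⟨cc, ?_, fun h2 => hcc.2 (Set.mem_singleton_iff.2 h2), hadjcc.ne',
                hadjcc⟩
              have h2 := hcc.1
              rw [hSeq] at h2
              simpa using h2
            have hmatch : (C.G.Adj a₁ b₁ ∧ C.G.Adj a₂ b₂) ∨
                (C.G.Adj a₁ b₂ ∧ C.G.Adj a₂ b₁) := by
              by_contra hcon
              have h1 : ¬ C.G.Adj a₁ b₁ ∨ ¬ C.G.Adj a₂ b₂ := by tauto
              have h2 : ¬ C.G.Adj a₁ b₂ ∨ ¬ C.G.Adj a₂ b₁ := by tauto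
              rcases h1 with hn1 | hn1 <;> rcases h2 with hn2 | hn2
              · obtain ⟨cc, hor, hccw, hccs, hadjcc⟩ := hnbr a₁ ha₁.1 a₂ ha12
                rcases hor with rfl | rfl | rfl | rfl
                · exact hccs rfl
                · exact hccw rfl
                · exact hn1 hadjcc
                · exact hn2 hadjcc
              · obtain ⟨cc, hor, hccw, hccs, hadjcc⟩ := hnbr b₁ hb₁.1 b₂ hb12
                rcases hor with rfl | rfl | rfl | rfl
                · exact hn1 hadjcc.symm
                · exact hn2 hadjcc.symm
                · exact hccs rfl
                · exact hccw rfl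
              · obtain ⟨cc, hor, hccw, hccs, hadjcc⟩ := hnbr b₂ hb₂.1 b₁ (Ne.symm hb12)
                rcases hor with rfl | rfl | rfl | rfl
                · exact hn2 hadjcc.symm
                · exact hn1 hadjcc.symm
                · exact hccw rfl
                · exact hccs rfl
              · obtain ⟨cc, hor, hccw, hccs, hadjcc⟩ := hnbr a₂ ha₂.1 a₁ (Ne.symm ha12)
                rcases hor with rfl | rfl | rfl | rfl
                · exact hccw rfl
                · exact hccs rfl
                · exact hn2 hadjcc
                · exact hn1 hadjcc
            have finish : ∀ aa₁ aa₂ bb₁ bb₂ : C.V,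
                aa₁ ∈ S → aa₂ ∈ S → bb₁ ∈ S → bb₂ ∈ S →
                C.G.Adj y aa₂ → C.G.Adj z bb₂ →
                S = {aa₁, aa₂, bb₁, bb₂} → aa₁ ≠ aa₂ → bb₁ ≠ bb₂ →
                aa₁ ≠ bb₁ → aa₁ ≠ bb₂ → aa₂ ≠ bb₁ → aa₂ ≠ bb₂ →
                C.G.Adj aa₁ bb₁ → C.G.Adj aa₂ bb₂ →
                ∃ C', IsProperSCMinor C C' ∧ GoodAlong C' := by
              intro aa₁ aa₂ bb₁ bb₂ hA1 hA2 hB1 hB2 hyA2 hzB2 hSeq' hA12 hB12 h13 h14 h23 h24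
                hadjE1 hadjE2
              have hdiffeq : S \ {aa₁, bb₁} = {aa₂, bb₂} := by
                rw [hSeq']
                ext t
                simp only [Set.mem_diff, Set.mem_insert_iff, Set.mem_singleton_iff]
                constructor
                · rintro ⟨rfl | rfl | rfl | rfl, hne2⟩
                  · exact absurd (by push_neg at hne2; exact hne2.1 rfl) id
                  · exact Or.inl rfl
                  · exact absurd (by push_neg at hne2; exact hne2.2 rfl) id
                  · exact Or.inr rfl
                · rintro (rfl | rfl)
                  · refine ⟨Or.inr (Or.inl rfl), ?_⟩
                    push_neg
                    exact ⟨Ne.symm hA12, h23⟩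
                  · refine ⟨Or.inr (Or.inr (Or.inr rfl)), ?_⟩
                    push_neg
                    exact ⟨Ne.symm h14, Ne.symm hB12⟩
              have hconn12 : ConnIn C.G (S \ {aa₁, bb₁}) := by
                rw [hdiffeq]
                exact connIn_pair hadjE2
              have haa₂mem : aa₂ ∈ S \ {aa₁, bb₁} := by rw [hdiffeq]; exact Or.inl rfl
              have hbb₂mem : bb₂ ∈ S \ {aa₁, bb₁} := by rw [hdiffeq]; exact Or.inr rfl
              refine good_contract C S h3 (by omega) hR hA1 hB1 hadjE1
                (mkStar hA1 hB1 hconn12 hRdel ?_)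
              intro yy hyy
              have hyyor : yy = y ∨ yy = z := by rw [hScEq] at hyy; simpa using hyy
              rcases hyyor with rfl | rfl
              · exact ⟨bb₂, z, hbb₂mem, ⟨hzSc, Ne.symm hyz⟩, hzB2.symm⟩
              · exact ⟨aa₂, y, haa₂mem, ⟨hySc, hyz⟩, hyA2.symm⟩
            rcases hmatch with ⟨hadjE1, hadjE2⟩ | ⟨hadjE1, hadjE2⟩
            · exact finish a₁ a₂ b₁ b₂ ha₁.1 ha₂.1 hb₁.1 hb₂.1 ha₂.2 hb₂.2 hSeq ha12 hb12
                (hYZne _ _ ha₁ hb₁) (hYZne _ _ ha₁ hb₂) (hYZne _ _ ha₂ hb₁) (hYZne _ _ ha₂ hb₂)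
                hadjE1 hadjE2
            · refine finish a₁ a₂ b₂ b₁ ha₁.1 ha₂.1 hb₂.1 hb₁.1 ha₂.2 hb₁.2 ?_ ha12
                (Ne.symm hb12) (hYZne _ _ ha₁ hb₂) (hYZne _ _ ha₁ hb₁) (hYZne _ _ ha₂ hb₂)
                (hYZne _ _ ha₂ hb₁) hadjE1 hadjE2
              rw [hSeq]
              ext t
              simp only [Set.mem_insert_iff, Set.mem_singleton_iff]
              tauto

end BSTC

/-- **Lemma (both_2_con).** If `Q[L]` is 2-connected but not a triangle, and `Q[R]` is
2-connected or a single edge, then `(Q, d)` is not irreducible. -/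
theorem both_sides_two_connected (C : CGraph) (S : Set C.V) (h : ThreeConnAlong C.G C.X S)
    (hL : (sideEdges C.G S).Nonempty) (hR : (sideEdges C.G Sᶜ).Nonempty)
    (hL2 : KConnected 2 (edgeSubgraph (sideEdges C.G S)))
    (hLt : ¬ IsTriangle (sideEdges C.G S))
    (hR2 : KConnected 2 (edgeSubgraph (sideEdges C.G Sᶜ)) ∨
      IsSingleEdge (sideEdges C.G Sᶜ)) :
    ¬ BondIrreducible C := by
  exact BSTC.main_lemma C S h hL hR hL2 hLt hR2
end

section
/- If G is a 2-connected simple graph that is not a triangle, then G has four contractible edges, two of which do not share an endvertex. -/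
open SimpleGraph

namespace FourContract

variable {V : Type} {G : SimpleGraph V}

/-- The inclusion homomorphism from an induced subgraph. -/
def inclHom (G : SimpleGraph V) (T : Set V) : G.induce T →g G :=
  ⟨Subtype.val, fun h => h⟩

lemma reach_induce {T : Set V} :
    ∀ {a b : V} (p : G.Walk a b), (∀ x ∈ p.support, x ∈ T) →
      ∀ (ha : a ∈ T) (hb : b ∈ T), (G.induce T).Reachable ⟨a, ha⟩ ⟨b, hb⟩ := by
  intro a b p
  induction p with
  | nil => intro _ ha hb; rfl
  | @cons a y b h q ih =>
    intro hp ha hb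
    have hy : y ∈ T := hp y (by simp [Walk.support_cons])
    have step : (G.induce T).Adj ⟨a, ha⟩ ⟨y, hy⟩ := h
    exact step.reachable.trans (ih (fun x hx => hp x (by simp [Walk.support_cons, hx])) hy hb)

lemma exists_path_induce {T : Set V} {a b : T} (h : (G.induce T).Reachable a b) :
    ∃ p : G.Walk a.1 b.1, p.IsPath ∧ ∀ x ∈ p.support, x ∈ T := by
  classical
  obtain ⟨w⟩ := h
  refine ⟨(w.map (inclHom G T)).bypass, Walk.bypass_isPath _, fun x hx => ?_⟩
  have := Walk.support_bypass_subset _ hx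
  replace this : x ∈ (w.map (inclHom G T)).support := this; rw [Walk.support_map (inclHom G T) w] at this
  obtain ⟨y, _, rfl⟩ := List.mem_map.1 this
  exact y.2

lemma length_rotate [DecidableEq V] {x u : V} (c : G.Walk x x) (h : u ∈ c.support) :
    (c.rotate u h).length = c.length := by
  rw [← Walk.length_edges, ← Walk.length_edges]
  exact (Walk.rotate_edges c u h).perm.length_eq

/-- A path ending at `u` whose edges contain `s(u,v)` ends with that edge. -/
lemma path_last_edge : ∀ {w u v : V} (q : G.Walk w u), q.IsPath → s(u, v) ∈ q.edges →
    ∃ q1 : G.Walk w v, q1.IsPath ∧ q.support = q1.support ++ [u] ∧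
      q.length = q1.length + 1 ∧ q.edges = q1.edges ++ [s(v, u)] := by
  intro w u v q
  induction q with
  | nil => simp
  | @cons w y u h q' ih =>
    intro hp he
    have hp' : q'.IsPath := hp.of_cons
    have hwns : w ∉ q'.support := (Walk.cons_isPath_iff h q').1 hp |>.2
    rw [Walk.edges_cons, List.mem_cons] at he
    rcases he with he | he
    · rcases Sym2.eq_iff.1 he with ⟨h1, h2⟩ | ⟨h1, h2⟩
      · exact absurd (h1 ▸ q'.end_mem_support) hwns
      · subst h1
        subst h2
        have : q' = Walk.nil := Walk.isPath_iff_eq_nil.1 hp'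
        subst this
        exact ⟨Walk.nil, Walk.IsPath.nil, by simp, by simp, by simp [Sym2.eq_swap]⟩
    · obtain ⟨q1, hq1p, hsup, hlen, hedg⟩ := ih hp' he
      refine ⟨Walk.cons h q1, ?_, ?_, ?_, ?_⟩
      · rw [Walk.cons_isPath_iff]
        exact ⟨hq1p, fun hw => hwns (by rw [hsup]; exact List.mem_append_left _ hw)⟩
      · simp [Walk.support_cons, hsup]
      · simp [Walk.length_cons, hlen]
      · simp [Walk.edges_cons, hedg]

/-- Removing an edge from a cycle yields a path with the remaining edges. -/
lemma cycle_split [DecidableEq V] {x u v : V} (c : G.Walk x x) (hc : c.IsCycle)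
    (he : s(u, v) ∈ c.edges) :
    ∃ p : G.Walk v u, p.IsPath ∧ s(u, v) ∉ p.edges ∧ p.length + 1 = c.length ∧
      ∀ e ∈ p.edges, e ∈ c.edges := by
  have hu : u ∈ c.support := Walk.fst_mem_support_of_mem_edges c he
  have hc' : (c.rotate u hu).IsCycle := hc.rotate hu
  have he' : s(u, v) ∈ (c.rotate u hu).edges := (Walk.rotate_edges c u hu).perm.mem_iff.2 he
  have hlen : (c.rotate u hu).length = c.length := length_rotate c hu
  have hedges : ∀ e ∈ (c.rotate u hu).edges, e ∈ c.edges := fun e h =>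
    (Walk.rotate_edges c u hu).perm.mem_iff.1 h
  set c' := c.rotate u hu with hc'def
  clear_value c'
  clear hc'def he hc hu
  rcases c' with _ | ⟨hadj, q⟩
  · exact absurd hc'.three_le_length (by simp)
  · rename_i y
    have hq : q.IsPath ∧ s(u, y) ∉ q.edges := (Walk.cons_isCycle_iff q hadj).1 hc'
    have hlen' : q.length + 1 = c.length := by simpa using hlen
    rw [Walk.edges_cons, List.mem_cons] at he'
    rcases he' with he' | he'
    · have hvy : v = y := by
        rcases Sym2.eq_iff.1 he' with ⟨_, h2⟩ | ⟨h1, _⟩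
        · exact h2
        · exact absurd h1 hadj.ne
      subst hvy
      exact ⟨q, hq.1, hq.2, hlen', fun e h => hedges e (by simp [Walk.edges_cons, h])⟩
    · -- s(u,v) in q.edges, q : Walk y u path; last edge is s(u,v)
      obtain ⟨q1, hq1p, hsup, hlenq, hedg⟩ := path_last_edge q hq.1 he'
      have hnsu : u ∉ q1.support := by
        have hnd : q.support.Nodup := hq.1.support_nodup
        rw [hsup] at hnd
        intro h'
        exact List.disjoint_of_nodup_append hnd h' (by simp)
      refine ⟨(Walk.cons hadj q1).reverse, ?_, ?_, ?_, ?_⟩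
      · apply Walk.IsPath.reverse
        rw [Walk.cons_isPath_iff]
        exact ⟨hq1p, hnsu⟩
      · rw [Walk.edges_reverse, List.mem_reverse, Walk.edges_cons, List.mem_cons]
        rintro (h' | h')
        · exact hq.2 (h' ▸ he')
        · have hnd : q.edges.Nodup := hq.1.isTrail.edges_nodup
          rw [hedg] at hnd
          exact List.disjoint_of_nodup_append hnd h' (by simp [Sym2.eq_swap])
      · simp only [Walk.length_reverse, Walk.length_cons]
        omega
      · intro e h'
        rw [Walk.edges_reverse, List.mem_reverse, Walk.edges_cons, List.mem_cons] at h'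
        rcases h' with h' | h'
        · exact hedges e (by simp [Walk.edges_cons, h'])
        · exact hedges e (by simp [Walk.edges_cons, hedg, List.mem_append, h'])





lemma conn_del [Finite V] (h2 : KConnected 2 G) (w : V) :
    (G.induce ({w}ᶜ : Set V)).Connected :=
  h2.2 {w} (by simp)

lemma conn_G [Finite V] (h2 : KConnected 2 G) : G.Connected := by
  have h := h2.2 ∅ (by simp)
  rw [Set.compl_empty] at h
  exact h.map (induceUnivIso G).toEmbedding.toHom (induceUnivIso G).toEquiv.surjective

lemma exists_notin_pair [Finite V] (h : 3 ≤ Nat.card V) (u v : V) :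
    ∃ z, z ≠ u ∧ z ≠ v := by
  by_contra hcon
  push_neg at hcon
  have hsub : (Set.univ : Set V) ⊆ {u, v} := by
    intro z _
    by_cases hz : z = u
    · exact Or.inl hz
    · exact Or.inr (hcon z hz)
  have := Set.ncard_le_ncard hsub (Set.toFinite _)
  rw [Set.ncard_univ] at this
  have h2 : ({u, v} : Set V).ncard ≤ 2 := by
    apply le_trans (Set.ncard_insert_le _ _)
    simp
  omega

lemma exists_notin_triple [Finite V] (h : 4 ≤ Nat.card V) (u v w : V) :
    ∃ z, z ≠ u ∧ z ≠ v ∧ z ≠ w := by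
  by_contra hcon
  push_neg at hcon
  have hsub : (Set.univ : Set V) ⊆ {u, v, w} := by
    intro z _
    by_cases h1 : z = u
    · exact Or.inl h1
    by_cases h2 : z = v
    · exact Or.inr (Or.inl h2)
    exact Or.inr (Or.inr (hcon z h1 h2))
  have := Set.ncard_le_ncard hsub (Set.toFinite _)
  rw [Set.ncard_univ] at this
  have h3 : ({u, v, w} : Set V).ncard ≤ 3 := by
    apply le_trans (Set.ncard_insert_le _ _)
    have : ({v, w} : Set V).ncard ≤ 2 := by
      apply le_trans (Set.ncard_insert_le _ _)
      simp
    omega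
  omega

lemma triangle_of_card3 [Finite V] (h2 : KConnected 2 G) (h3 : Nat.card V = 3) :
    IsTriangle G.edgeSet := by
  have huniv : (Set.univ : Set V).ncard = 3 := by rw [Set.ncard_univ, h3]
  obtain ⟨a, b, c, hab, hac, hbc, htriple⟩ := Set.ncard_eq_three.1 huniv
  have hall : ∀ x : V, x = a ∨ x = b ∨ x = c := by
    intro x
    have : x ∈ ({a, b, c} : Set V) := htriple ▸ Set.mem_univ x
    simpa using this
  have hadj : ∀ x y : V, x ≠ y → G.Adj x y := by
    intro x y hxy
    obtain ⟨z, hzx, hzy⟩ : ∃ z, z ≠ x ∧ z ≠ y := by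
      rcases hall x with rfl | rfl | rfl <;> rcases hall y with rfl | rfl | rfl <;>
        first
          | exact absurd rfl hxy
          | exact ⟨a, by tauto, by tauto⟩
          | exact ⟨b, by tauto, by tauto⟩
          | exact ⟨c, by tauto, by tauto⟩
    have hconn := conn_del h2 z
    have hx : x ∈ ({z}ᶜ : Set V) := by simpa using hzx.symm
    have hy : y ∈ ({z}ᶜ : Set V) := by simpa using hzy.symm
    have hr := hconn.preconnected ⟨x, hx⟩ ⟨y, hy⟩
    obtain ⟨p, hp, hsupp⟩ := exists_path_induce hr
    rcases p with _ | ⟨h, q⟩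
    · exact absurd rfl hxy
    · rename_i y'
      have hy' : y' ≠ z := by
        have := hsupp y' (by simp [Walk.support_cons])
        simpa using this
      have : y' = y := by
        rcases hall x with rfl | rfl | rfl <;> rcases hall y with rfl | rfl | rfl <;>
          rcases hall y' with rfl | rfl | rfl <;> rcases hall z with rfl | rfl | rfl <;>
            first
              | rfl
              | exact absurd rfl hxy
              | exact absurd rfl hy'
              | exact absurd rfl h.ne
              | exact absurd rfl hzx
              | exact absurd rfl hzy
              | tauto
      exact this ▸ h
  refine ⟨a, b, c, hab, hac, hbc, ?_⟩
  ext e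
  refine e.ind (fun x y => ?_)
  constructor
  · intro he
    have hxy : G.Adj x y := he
    have hne := hxy.ne
    simp only [Set.mem_insert_iff, Set.mem_singleton_iff]
    rcases hall x with rfl | rfl | rfl <;> rcases hall y with rfl | rfl | rfl <;>
      simp_all [Sym2.eq_iff] <;> tauto
  · intro he
    simp only [Set.mem_insert_iff, Set.mem_singleton_iff, Sym2.eq_iff] at he
    have : G.Adj x y := by
      rcases he with (⟨rfl, rfl⟩ | ⟨rfl, rfl⟩) | (⟨rfl, rfl⟩ | ⟨rfl, rfl⟩) |
        (⟨rfl, rfl⟩ | ⟨rfl, rfl⟩) <;>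
        first
          | exact hadj _ _ hab
          | exact hadj _ _ hab.symm
          | exact hadj _ _ hbc
          | exact hadj _ _ hbc.symm
          | exact hadj _ _ hac
          | exact hadj _ _ hac.symm
    exact this



lemma exists_path_induce' {T : Set V} {a b : T} (h : (G.induce T).Reachable a b) :
    ∃ p : G.Walk a.1 b.1, p.IsPath ∧ (∀ x ∈ p.support, x ∈ T) ∧
      ∀ x, x ∈ p.support → ∀ (hxT : x ∈ T), (G.induce T).Reachable a ⟨x, hxT⟩ := by
  classical
  obtain ⟨w⟩ := h
  refine ⟨(w.map (inclHom G T)).bypass, Walk.bypass_isPath _, fun x hx => ?_, fun x hx hxT => ?_⟩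
  · have := Walk.support_bypass_subset _ hx
    replace this : x ∈ (w.map (inclHom G T)).support := this; rw [Walk.support_map (inclHom G T) w] at this
    obtain ⟨y, _, rfl⟩ := List.mem_map.1 this
    exact y.2
  · have := Walk.support_bypass_subset _ hx
    replace this : x ∈ (w.map (inclHom G T)).support := this; rw [Walk.support_map (inclHom G T) w] at this
    obtain ⟨y, hy, rfl⟩ := List.mem_map.1 this
    have heq : (⟨(inclHom G T) y, hxT⟩ : T) = y := Subtype.ext rfl
    rw [heq]
    exact ⟨w.takeUntil y hy⟩

lemma exists_cycle [Finite V] (h2 : KConnected 2 G) (h4 : 4 ≤ Nat.card V) :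
    ∃ (x : V) (c : G.Walk x x), c.IsCycle := by
  classical
  have hconn := conn_G h2
  have hnt : Nontrivial V := by
    rw [← Finite.one_lt_card_iff_nontrivial]; omega
  obtain ⟨a, b, hab⟩ := exists_pair_ne V
  obtain ⟨u, v, huv⟩ : ∃ u v, G.Adj u v := by
    obtain ⟨w⟩ := hconn.preconnected a b
    rcases w with _ | ⟨h, _⟩
    · exact absurd rfl hab
    · exact ⟨_, _, h⟩
  obtain ⟨z, hzu, hzv⟩ := exists_notin_pair (by omega) u v
  -- neighbor w of u other than v
  obtain ⟨w, huw, hwv⟩ : ∃ w, G.Adj u w ∧ w ≠ v := by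
    have hconn' := conn_del h2 v
    have hu : u ∈ ({v}ᶜ : Set V) := by simpa using huv.ne
    have hz : z ∈ ({v}ᶜ : Set V) := by simpa using hzv
    obtain ⟨p, hp, hsupp⟩ := exists_path_induce (hconn'.preconnected ⟨u, hu⟩ ⟨z, hz⟩)
    rcases p with _ | ⟨h, q⟩
    · exact absurd rfl hzu.symm
    · rename_i w
      refine ⟨w, h, ?_⟩
      have := hsupp w (by simp [Walk.support_cons])
      simpa using this
  -- path from w to v avoiding u
  have hconn'' := conn_del h2 u
  have hw : w ∈ ({u}ᶜ : Set V) := by simpa using huw.ne'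
  have hv : v ∈ ({u}ᶜ : Set V) := by simpa using huv.ne'
  obtain ⟨r, hr, hrsupp⟩ := exists_path_induce (hconn''.preconnected ⟨w, hw⟩ ⟨v, hv⟩)
  have hur : u ∉ r.support := by
    intro h
    have := hrsupp u h
    simp at this
  refine ⟨u, Walk.cons huw (r.concat huv.symm), ?_⟩
  rw [Walk.cons_isCycle_iff]
  constructor
  · rw [Walk.isPath_def, Walk.support_concat]
    exact List.Nodup.append hr.support_nodup (List.nodup_singleton u)
      (by intro x hx hx'; simp at hx'; subst hx'; exact hur hx)
  · rw [Walk.edges_concat, List.concat_eq_append]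
    intro hmem
    rcases List.mem_append.1 hmem with h' | h'
    · exact hur (Walk.fst_mem_support_of_mem_edges r h')
    · rw [List.mem_singleton, Sym2.eq_iff] at h'
      rcases h' with ⟨h1, _⟩ | ⟨_, h2⟩
      · exact huv.ne h1
      · exact hwv h2

lemma cycle_length_le [Finite V] {x : V} (c : G.Walk x x) (hc : c.IsCycle) :
    c.length ≤ Nat.card V := by
  classical
  letI := Fintype.ofFinite V
  have h1 : c.support.tail.length = c.length := by
    have := c.length_support
    simp [List.length_tail, this]
  rw [← h1, Nat.card_eq_fintype_card]
  exact hc.support_nodup.length_le_card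

lemma exists_max_cycle [Finite V] (h2 : KConnected 2 G) (h4 : 4 ≤ Nat.card V) :
    ∃ (x : V) (c : G.Walk x x), c.IsCycle ∧
      ∀ (y : V) (d : G.Walk y y), d.IsCycle → d.length ≤ c.length := by
  classical
  set S : Set ℕ := {n | ∃ (x : V) (c : G.Walk x x), c.IsCycle ∧ c.length = n} with hS
  have hne : S.Nonempty := by
    obtain ⟨x, c, hc⟩ := exists_cycle h2 h4
    exact ⟨c.length, x, c, hc, rfl⟩
  have hbdd : BddAbove S := by
    refine ⟨Nat.card V, fun n hn => ?_⟩
    obtain ⟨x, c, hc, rfl⟩ := hn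
    exact cycle_length_le c hc
  obtain ⟨x, c, hc, hlen⟩ := Nat.sSup_mem hne hbdd
  exact ⟨x, c, hc, fun y d hd => hlen ▸ le_csSup hbdd ⟨y, d, hd, rfl⟩⟩

lemma path_reach_start {T : Set V} :
    ∀ {s t : V} (q : G.Walk s t), q.IsPath → (∀ z ∈ q.support, z ≠ t → z ∈ T) →
      ∀ (hs : s ∈ T), ∀ z, z ∈ q.support → z ≠ t → ∀ (hzT : z ∈ T),
        (G.induce T).Reachable ⟨z, hzT⟩ ⟨s, hs⟩ := by
  intro s t q
  induction q with
  | nil =>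
    intro _ _ hs z hz hzt _
    simp only [Walk.support_nil, List.mem_singleton] at hz
    exact absurd hz hzt
  | @cons s s' t h q' ih =>
    intro hp hT hs z hz hzt hzT
    rw [Walk.support_cons, List.mem_cons] at hz
    rcases hz with rfl | hz
    · exact Reachable.refl _
    · by_cases hs't : s' = t
      · subst hs't
        have : q' = Walk.nil := Walk.isPath_iff_eq_nil.1 hp.of_cons
        subst this
        simp only [Walk.support_nil, List.mem_singleton] at hz
        exact absurd hz hzt
      · have hs'T : s' ∈ T := hT s' (by simp [Walk.support_cons]) hs't
        have step : (G.induce T).Adj ⟨s, hs⟩ ⟨s', hs'T⟩ := h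
        have := ih hp.of_cons (fun w hw hwt => hT w (by simp [Walk.support_cons, hw]) hwt)
          hs'T z hz hzt hzT
        exact this.trans step.symm.reachable

lemma exists_exit {A : Set V} :
    ∀ {a b : V} (w : G.Walk a b), a ∈ A → b ∉ A →
      ∃ y z, G.Adj y z ∧ y ∈ A ∧ z ∉ A ∧ z ∈ w.support := by
  intro a b w
  induction w with
  | nil => intro ha hb; exact absurd ha hb
  | @cons a y b h w' ih =>
    intro ha hb
    by_cases hy : y ∈ A
    · obtain ⟨y', z', h1, h2, h3, h4⟩ := ih hy hb
      exact ⟨y', z', h1, h2, h3, by simp [Walk.support_cons, h4]⟩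
    · exact ⟨a, y, h, ha, hy, by simp [Walk.support_cons]⟩




lemma longest_cycle_edge_conn [Finite V] (h2 : KConnected 2 G) (h4 : 4 ≤ Nat.card V)
    {x u v : V} (c : G.Walk x x) (hc : c.IsCycle)
    (hmax : ∀ (y : V) (d : G.Walk y y), d.IsCycle → d.length ≤ c.length)
    (he : s(u, v) ∈ c.edges) : (G.induce ({u, v}ᶜ : Set V)).Connected := by
  classical
  have huv : G.Adj u v := (G.mem_edgeSet).1 (c.edges_subset_edgeSet he)
  obtain ⟨p, hp, hpe, hplen, hpsub⟩ := cycle_split c hc he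
  have hl3 := hc.three_le_length
  set T : Set V := ({u, v}ᶜ : Set V) with hT
  have hTiff : ∀ z : V, z ∈ T ↔ z ≠ u ∧ z ≠ v := fun z => by simp [hT]
  obtain ⟨z0, hz0u, hz0v⟩ := exists_notin_pair (by omega) u v
  have hz0T : z0 ∈ T := (hTiff z0).2 ⟨hz0u, hz0v⟩
  by_contra hnc
  rcases p with _ | ⟨hvm, p2⟩
  · simp only [Walk.length_nil] at hplen; omega
  · rename_i m
    have hp2 : p2.IsPath := hp.of_cons
    have hvns : v ∉ p2.support := ((Walk.cons_isPath_iff hvm p2).1 hp).2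
    have hplen2 : p2.length + 2 = c.length := by
      simp only [Walk.length_cons] at hplen; omega
    have hmu : m ≠ u := by
      intro h
      subst h
      have hnil := Walk.isPath_iff_eq_nil.1 hp2
      subst hnil
      simp only [Walk.length_nil] at hplen2; omega
    have hmT : m ∈ T := (hTiff m).2 ⟨hmu, hvm.ne'⟩
    have hclaim : ∀ z, z ∈ p2.support → z ≠ u → ∀ (hzT : z ∈ T),
        (G.induce T).Reachable ⟨z, hzT⟩ ⟨m, hmT⟩ := by
      intro z hz hzu hzT
      refine path_reach_start p2 hp2 ?_ hmT z hz hzu hzT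
      intro w hw hwu
      exact (hTiff w).2 ⟨hwu, fun h => hvns (h ▸ hw)⟩
    have hnonempty : Nonempty (T : Set V) := ⟨⟨z0, hz0T⟩⟩
    rw [connected_iff] at hnc
    push_neg at hnc
    have hnp : ¬ (G.induce T).Preconnected := fun h => (hnc h).false hnonempty.some
    rw [Preconnected] at hnp
    push_neg at hnp
    obtain ⟨a', b', hnr⟩ := hnp
    obtain ⟨a0, ha0⟩ : ∃ a0 : (T : Set V), ¬ (G.induce T).Reachable a0 ⟨m, hmT⟩ := by
      by_cases h1 : (G.induce T).Reachable a' ⟨m, hmT⟩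
      · exact ⟨b', fun h2 => hnr (h1.trans h2.symm)⟩
      · exact ⟨a', h1⟩
    set A : Set V := {z | ∃ hz : z ∈ T, (G.induce T).Reachable ⟨z, hz⟩ a0} with hA
    have ha0A : (a0 : V) ∈ A := ⟨a0.2, by rw [Subtype.coe_eta]⟩
    have hAT : ∀ z ∈ A, z ∈ T := fun z hz => hz.1
    have hAp : ∀ z ∈ A, z ∉ p2.support := by
      intro z hzA hzP
      obtain ⟨hzT, hzr⟩ := hzA
      have hzu : z ≠ u := ((hTiff z).1 hzT).1
      exact ha0 (hzr.symm.trans (hclaim z hzP hzu hzT))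
    have hclose : ∀ y z, G.Adj y z → z ∈ A → y ∈ T → y ∈ A := by
      intro y z hyz hzA hyT
      obtain ⟨hzT, hzr⟩ := hzA
      have step : (G.induce T).Adj ⟨y, hyT⟩ ⟨z, hzT⟩ := hyz
      exact ⟨hyT, step.reachable.trans hzr⟩
    have huT : u ∉ T := by simp [hT]
    have hvT : v ∉ T := by simp [hT]
    have huA : u ∉ A := fun h => huT (hAT u h)
    have hvA : v ∉ A := fun h => hvT (hAT v h)
    have ha0u : (a0 : V) ≠ u := ((hTiff _).1 a0.2).1
    have ha0v : (a0 : V) ≠ v := ((hTiff _).1 a0.2).2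
    obtain ⟨a1, ha1A, ha1u⟩ : ∃ a1, a1 ∈ A ∧ G.Adj u a1 := by
      have hconn' := conn_del h2 v
      have hm1 : (a0 : V) ∈ ({v}ᶜ : Set V) := by simpa using ha0v
      have hm2 : u ∈ ({v}ᶜ : Set V) := by simpa using huv.ne
      obtain ⟨W, hW, hWsupp⟩ := exists_path_induce (hconn'.preconnected ⟨a0, hm1⟩ ⟨u, hm2⟩)
      obtain ⟨y, z, hyz, hyA, hzA, hzsupp⟩ := exists_exit W ha0A huA
      have hzv : z ≠ v := by have := hWsupp z hzsupp; simpa using this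
      have hzu : z = u := by
        by_contra hzu
        exact hzA (hclose z y hyz.symm hyA ((hTiff z).2 ⟨hzu, hzv⟩))
      exact ⟨y, hyA, hzu ▸ hyz.symm⟩
    obtain ⟨a2, ha2A, ha2v⟩ : ∃ a2, a2 ∈ A ∧ G.Adj a2 v := by
      have hconn' := conn_del h2 u
      have hm1 : (a0 : V) ∈ ({u}ᶜ : Set V) := by simpa using ha0u
      have hm2 : v ∈ ({u}ᶜ : Set V) := by simpa using huv.ne'
      obtain ⟨W, hW, hWsupp⟩ := exists_path_induce (hconn'.preconnected ⟨a0, hm1⟩ ⟨v, hm2⟩)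
      obtain ⟨y, z, hyz, hyA, hzA, hzsupp⟩ := exists_exit W ha0A hvA
      have hzu : z ≠ u := by have := hWsupp z hzsupp; simpa using this
      have hzv : z = v := by
        by_contra hzv
        exact hzA (hclose z y hyz.symm hyA ((hTiff z).2 ⟨hzu, hzv⟩))
      exact ⟨y, hyA, hzv ▸ hyz⟩
    obtain ⟨ha1T, ha1r⟩ := ha1A
    obtain ⟨ha2T, ha2r⟩ := ha2A
    obtain ⟨r, hr, hrT, hrreach⟩ :=
      exists_path_induce' (a := ⟨a1, ha1T⟩) (b := ⟨a2, ha2T⟩) (ha1r.trans ha2r.symm)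
    have hrA : ∀ z ∈ r.support, z ∈ A := by
      intro z hz
      have hzT := hrT z hz
      exact ⟨hzT, (hrreach z hz hzT).symm.trans ha1r⟩
    have hAP : ∀ z ∈ A, z ∉ (Walk.cons hvm p2).support := by
      intro z hzA hzP
      rw [Walk.support_cons, List.mem_cons] at hzP
      rcases hzP with rfl | hzP
      · exact hvA hzA
      · exact hAp z hzA hzP
    set R : G.Walk a1 u := r.append (Walk.cons ha2v (Walk.cons hvm p2)) with hR
    have hRsupp : R.support = r.support ++ (Walk.cons hvm p2).support := by
      rw [hR, Walk.support_append, Walk.support_cons, List.tail_cons]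
    have hRpath : R.IsPath := by
      rw [Walk.isPath_def, hRsupp]
      exact List.Nodup.append hr.support_nodup hp.support_nodup
        (fun z hz1 hz2 => hAP z (hrA z hz1) hz2)
    have ha1A' : a1 ∈ A := ⟨ha1T, ha1r⟩
    have ha2A' : a2 ∈ A := ⟨ha2T, ha2r⟩
    have hbig : (Walk.cons ha1u R).IsCycle := by
      rw [Walk.cons_isCycle_iff]
      refine ⟨hRpath, ?_⟩
      rw [hR, Walk.edges_append, Walk.edges_cons]
      intro hmem
      rcases List.mem_append.1 hmem with h' | h'
      · exact huA (hrA u (Walk.fst_mem_support_of_mem_edges r h'))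
      · rcases List.mem_cons.1 h' with h'' | h''
        · rcases Sym2.eq_iff.1 h'' with ⟨h1, _⟩ | ⟨h1, _⟩
          · exact huA (h1.symm ▸ ha2A')
          · exact huv.ne h1
        · exact hAP a1 ha1A' (Walk.snd_mem_support_of_mem_edges _ h'')
    have hle := hmax u (Walk.cons ha1u R) hbig
    have : (Walk.cons ha1u R).length = r.length + p2.length + 3 := by
      rw [Walk.length_cons, hR, Walk.length_append, Walk.length_cons, Walk.length_cons]
      omega
    omega




lemma longest_ge_four [Finite V] (h2 : KConnected 2 G) (h4 : 4 ≤ Nat.card V)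
    {x : V} (c : G.Walk x x) (hc : c.IsCycle)
    (hmax : ∀ (y : V) (d : G.Walk y y), d.IsCycle → d.length ≤ c.length) :
    4 ≤ c.length := by
  classical
  by_contra hlt
  have hl3 := hc.three_le_length
  have hlen3 : c.length = 3 := by omega
  obtain ⟨e, he⟩ : ∃ e, e ∈ c.edges := by
    have h3 : c.edges.length = 3 := by rw [Walk.length_edges, hlen3]
    exact List.exists_mem_of_ne_nil _ (by intro hnil; rw [hnil] at h3; simp at h3)
  induction e using Sym2.ind with
  | _ u v =>
  have huv : G.Adj u v := (G.mem_edgeSet).1 (c.edges_subset_edgeSet he)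
  obtain ⟨p, hp, hpe, hplen, hpsub⟩ := cycle_split c hc he
  rcases p with _ | ⟨hvm, p2⟩
  · simp only [Walk.length_nil] at hplen; omega
  rename_i m
  rcases p2 with _ | ⟨hmw, p3⟩
  · simp only [Walk.length_cons, Walk.length_nil] at hplen; omega
  rename_i m2
  have hm2u : m2 = u := by
    have : p3.length = 0 := by
      simp only [Walk.length_cons] at hplen; omega
    exact (Walk.eq_of_length_eq_zero this)
  subst hm2u
  have hp3 : p3 = Walk.nil := Walk.isPath_iff_eq_nil.1 (hp.of_cons.of_cons)
  subst hp3
  have hsupp : (Walk.cons hvm (Walk.cons hmw Walk.nil)).support = [v, m, m2] := by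
    simp [Walk.support_cons]
  have hnd : ([v, m, m2] : List V).Nodup := hsupp ▸ hp.support_nodup
  have hvm' : v ≠ m := by simp at hnd; tauto
  have hvu : v ≠ m2 := by simp at hnd; tauto
  have hmu : m ≠ m2 := by simp at hnd; tauto
  have hvm_edge : s(v, m) ∈ c.edges := hpsub _ (by simp [Walk.edges_cons])
  have hconn_uv := longest_cycle_edge_conn h2 h4 c hc hmax he
  have hconn_vm := longest_cycle_edge_conn h2 h4 c hc hmax hvm_edge
  obtain ⟨d, hdu, hdv, hdm⟩ := exists_notin_triple h4 m2 v m
  obtain ⟨w, hmw2, hwu, hwv, hwm⟩ : ∃ w, G.Adj m w ∧ w ≠ m2 ∧ w ≠ v ∧ w ≠ m := by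
    have hd : d ∈ ({m2, v}ᶜ : Set V) := by simp [hdu, hdv]
    have hm : m ∈ ({m2, v}ᶜ : Set V) := by simp [hmu, hvm'.symm]
    obtain ⟨q, hq, hqsupp⟩ := exists_path_induce (hconn_uv.preconnected ⟨d, hd⟩ ⟨m, hm⟩)
    rcases hqr : q.reverse with _ | ⟨hmw', q'⟩
    · exfalso
      have h0 : q.length = 0 := by
        have := congrArg Walk.length hqr
        simpa using this
      exact hdm (Walk.eq_of_length_eq_zero h0)
    · rename_i w
      have hw : w ∈ q.support := by
        have : w ∈ q.reverse.support := by rw [hqr]; simp [Walk.support_cons]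
        rwa [Walk.support_reverse, List.mem_reverse] at this
      have hw' := hqsupp w hw
      simp only [Set.mem_compl_iff, Set.mem_insert_iff, Set.mem_singleton_iff] at hw'
      push_neg at hw'
      exact ⟨w, hmw', hw'.1, hw'.2, hmw'.ne'⟩
  have hw : w ∈ ({v, m}ᶜ : Set V) := by simp [hwv, hwm]
  have hu : m2 ∈ ({v, m}ᶜ : Set V) := by simp [hvu.symm, hmu.symm]
  obtain ⟨r, hr, hrsupp⟩ := exists_path_induce (hconn_vm.preconnected ⟨w, hw⟩ ⟨m2, hu⟩)
  have hvr : v ∉ r.support := fun h => by have := hrsupp v h; simp at this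
  have hmr : m ∉ r.support := fun h => by have := hrsupp m h; simp at this
  have hbig : (Walk.cons hvm (Walk.cons hmw2 (r.concat huv))).IsCycle := by
    rw [Walk.cons_isCycle_iff]
    constructor
    · rw [Walk.isPath_def, Walk.support_cons, Walk.support_concat]
      refine List.nodup_cons.2 ⟨?_, ?_⟩
      · intro hcon
        rcases List.mem_append.1 hcon with h' | h'
        · exact hmr h'
        · simp at h'; exact hvm' h'.symm
      · exact List.Nodup.append hr.support_nodup (List.nodup_singleton v)
          (fun z hz1 hz2 => by simp at hz2; subst hz2; exact hvr hz1)
    · rw [Walk.edges_cons, Walk.edges_concat, List.concat_eq_append]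
      intro hmem
      rcases List.mem_cons.1 hmem with h' | h'
      · rcases Sym2.eq_iff.1 h' with ⟨h1, _⟩ | ⟨h1, _⟩
        · exact hvm' h1
        · exact hwv h1.symm
      · rcases List.mem_append.1 h' with h'' | h''
        · exact hvr (Walk.fst_mem_support_of_mem_edges r h'')
        · simp only [List.mem_singleton] at h''
          rcases Sym2.eq_iff.1 h'' with ⟨h1, _⟩ | ⟨_, h2⟩
          · exact hvu h1
          · exact hmu h2
  have hle := hmax v _ hbig
  have hlen : (Walk.cons hvm (Walk.cons hmw2 (r.concat huv))).length = r.length + 3 := by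
    simp [Walk.length_cons, Walk.length_concat]
  have hrpos : r.length ≠ 0 := fun h => hwu (Walk.eq_of_length_eq_zero h)
  omega




lemma contractFun_apply_ne {u v : V} (huv : u ≠ v) {x : V} (hx : x ≠ v) :
    contractFun huv x = ⟨x, hx⟩ := by simp [contractFun, hx]

lemma contractFun_apply_v {u v : V} (huv : u ≠ v) : contractFun huv v = ⟨u, huv⟩ := by
  simp [contractFun]

lemma contract_adj {u v : V} (huv : u ≠ v) {x y : V} (hxy : G.Adj x y)
    (hne : contractFun huv x ≠ contractFun huv y) :
    (contractGraph G huv).Adj (contractFun huv x) (contractFun huv y) := by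
  rw [contractGraph, fromEdgeSet_adj]
  exact ⟨⟨s(x, y), (G.mem_edgeSet).2 hxy, Sym2.map_pair_eq _ _ _⟩, hne⟩

lemma reach_contract {u v : V} (huv : u ≠ v) {T' : Set {w : V // w ≠ v}} :
    ∀ {a b : V} (p : G.Walk a b), (∀ x ∈ p.support, contractFun huv x ∈ T') →
      ∀ (ha : contractFun huv a ∈ T') (hb : contractFun huv b ∈ T'),
        ((contractGraph G huv).induce T').Reachable ⟨contractFun huv a, ha⟩
          ⟨contractFun huv b, hb⟩ := by
  intro a b p
  induction p with
  | nil => intro _ _ _; rfl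
  | @cons a y b h q ih =>
    intro hp ha hb
    have hy : contractFun huv y ∈ T' := hp y (by simp [Walk.support_cons])
    have ihr := ih (fun x hx => hp x (by simp [Walk.support_cons, hx])) hy hb
    by_cases heq : contractFun huv a = contractFun huv y
    · have heq2 : (⟨contractFun huv a, ha⟩ : T') = ⟨contractFun huv y, hy⟩ := Subtype.ext heq
      rw [heq2]
      exact ihr
    · have step : ((contractGraph G huv).induce T').Adj ⟨contractFun huv a, ha⟩
        ⟨contractFun huv y, hy⟩ := contract_adj huv h heq
      exact step.reachable.trans ihr

lemma contract_coe {u v : V} (huv : u ≠ v) (a : {w : V // w ≠ v}) :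
    contractFun huv a.1 = a := by
  rcases a with ⟨w, hw⟩
  exact contractFun_apply_ne huv hw

lemma card_contract [Finite V] (v : V) :
    Nat.card {w : V // w ≠ v} = Nat.card V - 1 := by
  have he : {w : V // w ≠ v} ≃ ({v}ᶜ : Set V) :=
    Equiv.subtypeEquivRight (fun w => by simp)
  rw [Nat.card_congr he, Nat.card_coe_set_eq]
  have h := Set.ncard_add_ncard_compl ({v} : Set V)
  rw [Set.ncard_singleton] at h
  have hpos : 0 < Nat.card V := @Nat.card_pos _ ⟨v⟩ _
  omega

lemma contract_two_connected [Finite V] (h2 : KConnected 2 G) (h4 : 4 ≤ Nat.card V)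
    {u v : V} (huv : G.Adj u v)
    (hT : (G.induce ({u, v}ᶜ : Set V)).Connected) :
    KConnected 2 (contractGraph G huv.ne) := by
  classical
  have hcard : Nat.card {w : V // w ≠ v} = Nat.card V - 1 := card_contract v
  have hG : G.Connected := conn_G h2
  constructor
  · omega
  intro S hS
  have hS1 : S.ncard ≤ 1 := by omega
  rcases (Set.ncard_le_one_iff_eq (Set.toFinite S)).1 hS1 with rfl | ⟨x0, rfl⟩
  · -- S = ∅
    rw [Set.compl_empty]
    rw [connected_iff]
    refine ⟨fun A B => ?_, ⟨⟨⟨u, huv.ne⟩, Set.mem_univ _⟩⟩⟩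
    obtain ⟨p⟩ := hG.preconnected A.1.1 B.1.1
    have hr := reach_contract huv.ne p (fun x _ => Set.mem_univ _) (Set.mem_univ _)
      (Set.mem_univ _)
    have eA : (⟨contractFun huv.ne A.1.1, Set.mem_univ _⟩ :
        (Set.univ : Set {w : V // w ≠ v})) = A :=
      Subtype.ext (contract_coe huv.ne A.1)
    have eB : (⟨contractFun huv.ne B.1.1, Set.mem_univ _⟩ :
        (Set.univ : Set {w : V // w ≠ v})) = B :=
      Subtype.ext (contract_coe huv.ne B.1)
    rw [eA, eB] at hr
    exact hr
  · -- S = {x0}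
    by_cases hx0 : x0.1 = u
    · -- deleting the contracted vertex: use hT
      rw [connected_iff]
      constructor
      · intro A B
        have hAu : A.1.1 ≠ u := by
          intro h
          exact (Set.mem_compl_singleton_iff.1 A.2) (Subtype.ext (h.trans hx0.symm))
        have hBu : B.1.1 ≠ u := by
          intro h
          exact (Set.mem_compl_singleton_iff.1 B.2) (Subtype.ext (h.trans hx0.symm))
        have hAT : A.1.1 ∈ ({u, v}ᶜ : Set V) := by simp [hAu, A.1.2]
        have hBT : B.1.1 ∈ ({u, v}ᶜ : Set V) := by simp [hBu, B.1.2]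
        obtain ⟨p, hp, hsup⟩ := exists_path_induce (hT.preconnected ⟨A.1.1, hAT⟩ ⟨B.1.1, hBT⟩)
        have hcond : ∀ x ∈ p.support, contractFun huv.ne x ∈ ({x0}ᶜ : Set {w : V // w ≠ v}) := by
          intro x hx
          have hxT := hsup x hx
          simp only [Set.mem_compl_iff, Set.mem_insert_iff, Set.mem_singleton_iff] at hxT
          push_neg at hxT
          rw [contractFun_apply_ne huv.ne hxT.2]
          simp only [Set.mem_compl_iff, Set.mem_singleton_iff]
          intro h
          exact hxT.1 ((congrArg Subtype.val h).trans hx0)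
        have hr := reach_contract huv.ne p hcond
          (hcond _ p.start_mem_support) (hcond _ p.end_mem_support)
        have eA : (⟨contractFun huv.ne A.1.1, hcond _ p.start_mem_support⟩ :
            ({x0}ᶜ : Set {w : V // w ≠ v})) = A :=
          Subtype.ext (contract_coe huv.ne A.1)
        have eB : (⟨contractFun huv.ne B.1.1, hcond _ p.end_mem_support⟩ :
            ({x0}ᶜ : Set {w : V // w ≠ v})) = B :=
          Subtype.ext (contract_coe huv.ne B.1)
        rw [eA, eB] at hr
        exact hr
      · obtain ⟨z, hzu, hzv⟩ := exists_notin_pair (by omega) u v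
        refine ⟨⟨⟨z, hzv⟩, ?_⟩⟩
        simp only [Set.mem_compl_iff, Set.mem_singleton_iff]
        intro h
        exact hzu ((congrArg Subtype.val h).trans hx0)
    · -- deleting an ordinary vertex
      have hconn' := conn_del h2 x0.1
      rw [connected_iff]
      constructor
      · intro A B
        have hAx : A.1.1 ≠ x0.1 := by
          intro h
          exact (Set.mem_compl_singleton_iff.1 A.2) (Subtype.ext h)
        have hBx : B.1.1 ≠ x0.1 := by
          intro h
          exact (Set.mem_compl_singleton_iff.1 B.2) (Subtype.ext h)
        have hAT : A.1.1 ∈ ({x0.1}ᶜ : Set V) := by simpa using hAx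
        have hBT : B.1.1 ∈ ({x0.1}ᶜ : Set V) := by simpa using hBx
        obtain ⟨p, hp, hsup⟩ := exists_path_induce (hconn'.preconnected ⟨A.1.1, hAT⟩ ⟨B.1.1, hBT⟩)
        have hcond : ∀ x ∈ p.support, contractFun huv.ne x ∈ ({x0}ᶜ : Set {w : V // w ≠ v}) := by
          intro x hx
          have hxT : x ≠ x0.1 := by simpa using hsup x hx
          simp only [Set.mem_compl_iff, Set.mem_singleton_iff]
          by_cases hxv : x = v
          · subst hxv
            rw [contractFun_apply_v huv.ne]
            intro h
            exact hx0 (congrArg Subtype.val h).symm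
          · rw [contractFun_apply_ne huv.ne hxv]
            intro h
            exact hxT (congrArg Subtype.val h)
        have hr := reach_contract huv.ne p hcond
          (hcond _ p.start_mem_support) (hcond _ p.end_mem_support)
        have eA : (⟨contractFun huv.ne A.1.1, hcond _ p.start_mem_support⟩ :
            ({x0}ᶜ : Set {w : V // w ≠ v})) = A :=
          Subtype.ext (contract_coe huv.ne A.1)
        have eB : (⟨contractFun huv.ne B.1.1, hcond _ p.end_mem_support⟩ :
            ({x0}ᶜ : Set {w : V // w ≠ v})) = B :=
          Subtype.ext (contract_coe huv.ne B.1)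
        rw [eA, eB] at hr
        exact hr
      · refine ⟨⟨⟨u, huv.ne⟩, ?_⟩⟩
        simp only [Set.mem_compl_iff, Set.mem_singleton_iff]
        intro h
        exact hx0 (congrArg Subtype.val h).symm

end FourContract

/-- **Lemma (tutte_lem).** A 2-connected graph that is not a triangle has four contractible
edges, two of which do not share an endvertex. -/
theorem four_contractible_edges {V : Type} [Finite V] (G : SimpleGraph V)
    (h2 : KConnected 2 G) (hnt : ¬ IsTriangle G.edgeSet) :
    ∃ T : Finset (Sym2 V), T.card = 4 ∧ (∀ e ∈ T, e ∈ G.edgeSet) ∧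
      (∀ e ∈ T, ∀ u v : V, ∀ h : G.Adj u v, e = s(u, v) →
        KConnected 2 (contractGraph G h.ne)) ∧
      ∃ e ∈ T, ∃ f ∈ T, ∀ x ∈ e, x ∉ f := by
  classical
  have h3 : 3 ≤ Nat.card V := h2.1
  have h4 : 4 ≤ Nat.card V := by
    rcases Nat.lt_or_ge (Nat.card V) 4 with h | h
    · exact absurd (FourContract.triangle_of_card3 h2 (by omega)) hnt
    · exact h
  obtain ⟨x, c, hc, hmax⟩ := FourContract.exists_max_cycle h2 h4
  have hlen4 := FourContract.longest_ge_four h2 h4 c hc hmax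
  have hkey : ∀ e ∈ c.edges, ∀ u v : V, ∀ h : G.Adj u v, e = s(u, v) →
      KConnected 2 (contractGraph G h.ne) := by
    intro e he u v h heq
    subst heq
    exact FourContract.contract_two_connected h2 h4 h
      (FourContract.longest_cycle_edge_conn h2 h4 c hc hmax he)
  rcases c with _ | ⟨h1, c1⟩
  · simp at hlen4
  rename_i a1
  rcases c1 with _ | ⟨hA2, c2⟩
  · simp [Walk.length_cons, Walk.length_nil] at hlen4
  rename_i a2
  rcases c2 with _ | ⟨hA3, c3⟩
  · simp [Walk.length_cons, Walk.length_nil] at hlen4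
  rename_i a3
  rcases c3 with _ | ⟨hA4, c4⟩
  · simp [Walk.length_cons, Walk.length_nil] at hlen4
  rename_i a4
  -- distinctness facts
  have hnd := hc.support_nodup
  simp only [Walk.support_cons, List.tail_cons, List.nodup_cons, List.mem_cons] at hnd
  push_neg at hnd
  obtain ⟨⟨n12, n13, n1c⟩, ⟨n23, n2c⟩, n3c, _⟩ := hnd
  have ha4mem : a4 ∈ c4.support := c4.start_mem_support
  have hxmem : x ∈ c4.support := c4.end_mem_support
  have n14 : a1 ≠ a4 := fun h => n1c (h ▸ ha4mem)
  have n1x : a1 ≠ x := fun h => n1c (h ▸ hxmem)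
  have n24 : a2 ≠ a4 := fun h => n2c (h ▸ ha4mem)
  have n2x : a2 ≠ x := fun h => n2c (h ▸ hxmem)
  have n34 : a3 ≠ a4 := hA4.ne
  have n3x : a3 ≠ x := fun h => n3c (h ▸ hxmem)
  have nx1 : x ≠ a1 := h1.ne
  -- the four edges
  set e0 : Sym2 V := s(x, a1) with he0
  set e1 : Sym2 V := s(a1, a2) with he1
  set e2 : Sym2 V := s(a2, a3) with he2
  set e3 : Sym2 V := s(a3, a4) with he3
  have d01 : e0 ≠ e1 := by
    rw [he0, he1]; intro hEq; rcases Sym2.eq_iff.1 hEq with ⟨h, _⟩ | ⟨h, _⟩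
    · exact nx1 h
    · exact n2x h.symm
  have d02 : e0 ≠ e2 := by
    rw [he0, he2]; intro hEq; rcases Sym2.eq_iff.1 hEq with ⟨h, _⟩ | ⟨h, _⟩
    · exact n2x h.symm
    · exact n3x h.symm
  have d03 : e0 ≠ e3 := by
    rw [he0, he3]; intro hEq; rcases Sym2.eq_iff.1 hEq with ⟨h, _⟩ | ⟨_, h⟩
    · exact n3x h.symm
    · exact n13 h
  have d12 : e1 ≠ e2 := by
    rw [he1, he2]; intro hEq; rcases Sym2.eq_iff.1 hEq with ⟨h, _⟩ | ⟨h, _⟩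
    · exact n12 h
    · exact n13 h
  have d13 : e1 ≠ e3 := by
    rw [he1, he3]; intro hEq; rcases Sym2.eq_iff.1 hEq with ⟨h, _⟩ | ⟨h, _⟩
    · exact n13 h
    · exact n14 h
  have d23 : e2 ≠ e3 := by
    rw [he2, he3]; intro hEq; rcases Sym2.eq_iff.1 hEq with ⟨h, _⟩ | ⟨h, _⟩
    · exact n23 h
    · exact n24 h
  refine ⟨{e0, e1, e2, e3}, ?_, ?_, ?_, ?_⟩
  · rw [Finset.card_insert_of_notMem (by simp [d01, d02, d03]),
      Finset.card_insert_of_notMem (by simp [d12, d13]),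
      Finset.card_insert_of_notMem (by simp [d23]), Finset.card_singleton]
  · intro e he
    simp only [Finset.mem_insert, Finset.mem_singleton] at he
    rcases he with rfl | rfl | rfl | rfl
    · exact (G.mem_edgeSet).2 h1
    · exact (G.mem_edgeSet).2 hA2
    · exact (G.mem_edgeSet).2 hA3
    · exact (G.mem_edgeSet).2 hA4
  · intro e he
    apply hkey
    simp only [Finset.mem_insert, Finset.mem_singleton] at he
    rcases he with rfl | rfl | rfl | rfl <;>
      simp [Walk.edges_cons, he0, he1, he2, he3]
  · refine ⟨e0, by simp, e2, by simp, ?_⟩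
    intro z hz hz2
    rw [he0, Sym2.mem_iff] at hz
    rw [he2, Sym2.mem_iff] at hz2
    rcases hz with rfl | rfl <;> rcases hz2 with h | h
    · exact n2x h.symm
    · exact n3x h.symm
    · exact n12 h
    · exact n13 h
end
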